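/- arXiv:1803.06806 — 7 statements merged into one kernel-verified Lean document; each statement's English description precedes it below -/
import Mathlib

section
/- Let a ≥ 0 and l ≥ b ≥ 1 be integers, and let (d_1,…,d_l) be an (a,b)-sequence. Then there does not exist an integer m with 0 < m < l such that (∑_{i=1}^{m} (−1)^i d_i) · (∑_{i=1}^{m+1} (−1)^i d_i) > 0. -/
/-!
The partial sums `S_m = ∑_{i ≤ m} (-1)^i d_i` alternate in sign: `(-1)^m S_m ≥ 0` for every
`m ≤ l`. Since `(-1)^(m+2) S_(m+2) = (-1)^m S_m + (d_(m+2) - d_(m+1))`, this propagates upwards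
from `S_0 = 0` and `-S_1 = d_1` along the increasing prefix `d_i = a + i`, and downwards from
`S_l = 0` and `(-1)^(l-1) S_(l-1) = d_l` along the decreasing tail. Two consecutive partial sums
therefore never have a positive product.
-/

/-- The `i`-th entry (1-indexed) of a list of naturals, defaulting to `0`. -/
def entry (d : List ℕ) (i : ℕ) : ℕ := d.getD (i - 1) 0

/-- The alternating partial sum `∑_{i=1}^{m} (−1)^i d_i` of a list `d`. -/
def altSum (d : List ℕ) (m : ℕ) : ℤ :=
  ∑ i ∈ Finset.Icc 1 m, (-1 : ℤ) ^ i * (entry d i : ℤ)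

/-- `d = (d_1, …, d_l)` is an `(a,b)`-sequence: it is a list of positive integers with
`l ≥ b ≥ 1`, `d_i = a + i` for `1 ≤ i ≤ b`, `d_b ≥ d_{b+1} ≥ ⋯ ≥ d_l ≥ 1`, and
`∑_{i=1}^{l} (−1)^i d_i = 0`. -/
def IsABSeq (a b : ℕ) (d : List ℕ) : Prop :=
  1 ≤ b ∧ b ≤ d.length ∧
  (∀ i, 1 ≤ i → i ≤ d.length → 1 ≤ entry d i) ∧
  (∀ i, 1 ≤ i → i ≤ b → entry d i = a + i) ∧
  (∀ i j, b ≤ i → i ≤ j → j ≤ d.length → entry d j ≤ entry d i) ∧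
  altSum d d.length = 0

/-- An (ordinary) partition, recorded as a weakly decreasing list of positive parts. -/
def IsPartitionList (L : List ℕ) : Prop :=
  L.Pairwise (· ≥ ·) ∧ ∀ x ∈ L, 0 < x

/-- A strict partition: a strictly decreasing list of positive parts. -/
def IsStrictPartition (L : List ℕ) : Prop :=
  L.Pairwise (· > ·) ∧ ∀ x ∈ L, 0 < x

/-- The column sequence of the shifted Young diagram of a strict partition `L`:
`colSeq L j = #{ i : 1 ≤ i ≤ m, i ≤ j ≤ λ_i + i − 1 }`. -/
def colSeq (L : List ℕ) (j : ℕ) : ℕ :=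
  ((Finset.Icc 1 L.length).filter (fun i => i ≤ j ∧ j ≤ entry L i + i - 1)).card

/-- The BG-rank of a partition: the number of odd-indexed odd parts minus
the number of even-indexed odd parts (indices starting at 1). -/
def bgRank (L : List ℕ) : ℤ :=
  (((Finset.Icc 1 L.length).filter (fun i => Odd i ∧ Odd (entry L i))).card : ℤ) -
  (((Finset.Icc 1 L.length).filter (fun i => Even i ∧ Odd (entry L i))).card : ℤ)

/-- `qj j n`: the number of strict partitions of `n` whose BG-rank equals `j`. -/
noncomputable def qj (j : ℤ) (n : ℕ) : ℕ :=
  Set.ncard {L : List ℕ | IsStrictPartition L ∧ L.sum = n ∧ bgRank L = j}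

lemma altSum_succ (d : List ℕ) (m : ℕ) :
    altSum d (m + 1) = altSum d m + (-1) ^ (m + 1) * (entry d (m + 1) : ℤ) :=
  Finset.sum_Icc_succ_top (by omega) _

lemma neg_one_pow_mul_altSum_succ (d : List ℕ) (m : ℕ) :
    (-1) ^ (m + 1) * altSum d (m + 1) = entry d (m + 1) - (-1) ^ m * altSum d m := by
  rw [altSum_succ, mul_add, ← mul_assoc, ← pow_add, Even.neg_one_pow ⟨m + 1, rfl⟩, pow_succ]
  ring

lemma neg_one_pow_mul_altSum_add_two (d : List ℕ) (m : ℕ) :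
    (-1) ^ (m + 2) * altSum d (m + 2) =
      (-1) ^ m * altSum d m + ((entry d (m + 2) : ℤ) - entry d (m + 1)) := by
  rw [neg_one_pow_mul_altSum_succ, neg_one_pow_mul_altSum_succ]
  ring

lemma neg_one_pow_mul_altSum_nonneg_of_monotone (d : List ℕ) (m : ℕ)
    (hmono : ∀ i, 1 ≤ i → i < m → entry d i ≤ entry d (i + 1)) :
    0 ≤ (-1) ^ m * altSum d m := by
  induction m using Nat.twoStepInduction with
  | zero => simp [altSum]
  | one => simp [altSum]
  | more m ih _ =>
    rw [neg_one_pow_mul_altSum_add_two]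
    have hstep : entry d (m + 1) ≤ entry d (m + 2) := hmono (m + 1) (by omega) (by omega)
    have := ih fun i hi him => hmono i hi (by omega)
    omega

lemma neg_one_pow_mul_altSum_nonneg_of_antitone (d : List ℕ) (n : ℕ) (hn : altSum d n = 0)
    (m : ℕ) (hmn : m ≤ n) (hanti : ∀ i, m < i → i < n → entry d (i + 1) ≤ entry d i) :
    0 ≤ (-1) ^ m * altSum d m := by
  induction h : n - m using Nat.strong_induction_on generalizing m with
  | _ k ih =>
    rcases (show m = n ∨ m + 1 = n ∨ m + 2 ≤ n by omega) with rfl | rfl | hm2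
    · simp [hn]
    · have := neg_one_pow_mul_altSum_succ d m
      rw [hn, mul_zero] at this
      omega
    · have hstep : entry d (m + 2) ≤ entry d (m + 1) := hanti (m + 1) (by omega) (by omega)
      have := ih (n - (m + 2)) (by omega) (m + 2) hm2 (fun i hi hin => hanti i (by omega) hin) rfl
      rw [neg_one_pow_mul_altSum_add_two] at this
      omega

lemma IsABSeq.neg_one_pow_mul_altSum_nonneg {a b : ℕ} {d : List ℕ} (h : IsABSeq a b d)
    {m : ℕ} (hm : m ≤ d.length) : 0 ≤ (-1) ^ m * altSum d m := by
  obtain ⟨-, hbl, -, hinit, htail, hsum⟩ := h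
  rcases le_or_gt m b with hmb | hbm
  · refine neg_one_pow_mul_altSum_nonneg_of_monotone d m fun i hi him => ?_
    rw [hinit i hi (by omega), hinit (i + 1) (by omega) (by omega)]
    omega
  · exact neg_one_pow_mul_altSum_nonneg_of_antitone d d.length hsum m hm
      fun i hmi hil => htail i (i + 1) (by omega) (by omega) (by omega)

/-- Lemma 2.2(1): For an `(a,b)`-sequence `(d_1,…,d_l)`, there is no `m` with `0 < m < l`
such that `(∑_{i=1}^{m} (−1)^i d_i) · (∑_{i=1}^{m+1} (−1)^i d_i) > 0`. -/
theorem no_same_sign_partial_sums (a b : ℕ) (d : List ℕ) (h : IsABSeq a b d) :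
    ¬ ∃ m : ℕ, 0 < m ∧ m < d.length ∧ altSum d m * altSum d (m + 1) > 0 := by
  rintro ⟨m, -, hml, hpos⟩
  have hm := h.neg_one_pow_mul_altSum_nonneg hml.le
  have hm1 := h.neg_one_pow_mul_altSum_nonneg (m := m + 1) hml
  have hprod : 0 ≤ (-1) ^ m * altSum d m * ((-1) ^ (m + 1) * altSum d (m + 1)) :=
    mul_nonneg hm hm1
  have hsign : ((-1 : ℤ) ^ m * (-1) ^ (m + 1)) = -1 := by
    rw [← pow_add, Odd.neg_one_pow ⟨m, by ring⟩]
  nlinarith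
end

section
/- Let a ≥ 0 and l ≥ b ≥ 1 be integers, and let (d_1,…,d_l) be an (a,b)-sequence. If for some integer n with b − 1 ≤ n ≤ l we have ∑_{i=1}^{n} (−1)^i d_i = 0, then n ≡ l (mod 2), and the remaining entries pair up as d_{n+1} = d_{n+2} ≥ d_{n+3} = d_{n+4} ≥ ⋯ ≥ d_{l−1} = d_l (i.e., d_{n+2j−1} = d_{n+2j} for all 1 ≤ j ≤ (l−n)/2, and d_{n+2j} ≥ d_{n+2j+1} for all 1 ≤ j < (l−n)/2). -/
/-!
Shift the tail `d_{n+1}, …, d_l` to `e_1, …, e_m` with `m = l - n`. Since both `altSum d n` and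
`altSum d l` vanish, `∑_{j=1}^{m} (−1)^j e_j = 0`. Grouping the terms in consecutive pairs, each
`e_{2t} − e_{2t−1}` is `≤ 0` because the tail is weakly decreasing; if `m` were odd the leftover
term `−e_m < 0` would make the sum negative, so `m` is even and every pair difference is `0`.
-/

open Finset

section AlternatingSum

variable {R : Type*}

lemma sum_Icc_neg_one_pow_mul_add [Ring R] (f : ℕ → R) (n m : ℕ) :
    ∑ i ∈ Icc 1 (n + m), (-1 : R) ^ i * f i =
      ∑ i ∈ Icc 1 n, (-1 : R) ^ i * f i + (-1) ^ n * ∑ j ∈ Icc 1 m, (-1 : R) ^ j * f (n + j) := by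
  induction m with
  | zero => simp
  | succ m ih =>
    rw [← add_assoc, sum_Icc_succ_top (by omega), ih, sum_Icc_succ_top (by omega), mul_add,
      add_assoc, add_assoc n m 1, pow_add (-1 : R) n, mul_assoc]

lemma sum_Icc_neg_one_pow_mul_two_mul [Ring R] (f : ℕ → R) (k : ℕ) :
    ∑ j ∈ Icc 1 (2 * k), (-1 : R) ^ j * f j = ∑ t ∈ Icc 1 k, (f (2 * t) - f (2 * t - 1)) := by
  induction k with
  | zero => simp
  | succ k ih =>
    rw [show 2 * (k + 1) = 2 * k + 1 + 1 by ring, sum_Icc_succ_top (by omega),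
      sum_Icc_succ_top (by omega), ih, sum_Icc_succ_top (by omega),
      Odd.neg_one_pow ⟨k, rfl⟩, Even.neg_one_pow ⟨k + 1, by ring⟩,
      show 2 * (k + 1) - 1 = 2 * k + 1 by omega, show 2 * (k + 1) = 2 * k + 1 + 1 by ring,
      neg_one_mul, one_mul, add_assoc, sub_eq_neg_add _ (f (2 * k + 1)), add_comm (-f _)]

variable [CommRing R] [LinearOrder R] [IsStrictOrderedRing R]

theorem even_and_pairs_eq_of_sum_neg_one_pow_mul_eq_zero {f : ℕ → R} {m : ℕ}
    (hf : AntitoneOn f (Set.Icc 1 m)) (hpos : ∀ j ∈ Icc 1 m, 0 < f j)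
    (hsum : ∑ j ∈ Icc 1 m, (-1 : R) ^ j * f j = 0) :
    Even m ∧ ∀ t ∈ Icc 1 (m / 2), f (2 * t - 1) = f (2 * t) := by
  obtain ⟨k, hk⟩ := Nat.even_or_odd' m
  have hpair : ∀ t ∈ Icc 1 k, f (2 * t) - f (2 * t - 1) ≤ 0 := fun t ht => by
    rw [mem_Icc] at ht
    exact sub_nonpos.mpr <| hf ⟨by omega, by omega⟩ ⟨by omega, by omega⟩ (by omega)
  rcases hk with rfl | rfl
  · rw [sum_Icc_neg_one_pow_mul_two_mul, sum_eq_zero_iff_of_nonpos hpair] at hsum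
    refine ⟨even_two_mul k, fun t ht => ?_⟩
    rw [Nat.mul_div_cancel_left k two_pos] at ht
    exact (sub_eq_zero.mp (hsum t ht)).symm
  · rw [sum_Icc_succ_top (by omega), sum_Icc_neg_one_pow_mul_two_mul,
      Odd.neg_one_pow ⟨k, rfl⟩] at hsum
    have hlast := hpos (2 * k + 1) (mem_Icc.mpr ⟨by omega, le_rfl⟩)
    have hpairs := sum_nonpos hpair
    linarith

end AlternatingSum

/-- Lemma 2.2(2): If an initial alternating sum of an `(a,b)`-sequence vanishes at some
`n ≥ b − 1`, then `n ≡ l (mod 2)` and the remaining entries pair up as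
`d_{n+1} = d_{n+2} ≥ d_{n+3} = d_{n+4} ≥ ⋯ ≥ d_{l−1} = d_l`. -/
theorem pairing_after_vanishing_altSum (a b : ℕ) (d : List ℕ) (h : IsABSeq a b d)
    (n : ℕ) (hn1 : b - 1 ≤ n) (hn2 : n ≤ d.length) (hzero : altSum d n = 0) :
    n ≡ d.length [MOD 2] ∧
    (∀ j, 1 ≤ j → j ≤ (d.length - n) / 2 →
      entry d (n + 2 * j - 1) = entry d (n + 2 * j)) ∧
    (∀ j, 1 ≤ j → j < (d.length - n) / 2 →
      entry d (n + 2 * j + 1) ≤ entry d (n + 2 * j)) := by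
  obtain ⟨-, -, hpos, -, hmono, htotal⟩ := h
  obtain ⟨m, hm⟩ := Nat.exists_eq_add_of_le hn2
  have htail : ∑ j ∈ Icc 1 m, (-1 : ℤ) ^ j * (entry d (n + j) : ℤ) = 0 := by
    have hsplit := sum_Icc_neg_one_pow_mul_add (fun i => (entry d i : ℤ)) n m
    rw [← hm] at hsplit
    change altSum d d.length = altSum d n + _ at hsplit
    rw [htotal, hzero, zero_add, eq_comm] at hsplit
    exact (mul_eq_zero.mp hsplit).resolve_left (pow_ne_zero _ (by norm_num))
  have hanti : AntitoneOn (fun j => (entry d (n + j) : ℤ)) (Set.Icc 1 m) :=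
    fun i hi j hj hij => by
      rw [Set.mem_Icc] at hi hj
      exact Int.ofNat_le.mpr <| hmono (n + i) (n + j) (by omega) (by omega) (by omega)
  obtain ⟨heven, hpairs⟩ := even_and_pairs_eq_of_sum_neg_one_pow_mul_eq_zero hanti
    (fun j hj => by rw [mem_Icc] at hj; exact_mod_cast hpos (n + j) (by omega) (by omega)) htail
  rw [hm, Nat.add_sub_cancel_left]
  refine ⟨(Nat.modEq_iff_dvd' (by omega)).mpr ?_, fun j hj1 hj2 => ?_,
    fun j hj1 hj2 => hmono _ _ (by omega) (by omega) (by omega)⟩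
  · rwa [Nat.add_sub_cancel_left, ← even_iff_two_dvd]
  · have := hpairs j (mem_Icc.mpr ⟨hj1, hj2⟩)
    rw [show n + 2 * j - 1 = n + (2 * j - 1) by omega]
    exact_mod_cast this
end

section
/- For every fixed integer a ≥ 0, every integer b ≥ 1, and every integer n ≥ 0, the number of (a,b)-sequences Δ with |Δ| = 2n equals the number of partitions of n belonging to P_{a,b}. -/
/-!
Both sides are put in bijection with pairs of partitions `(U, V)`. An `(a,b)`-sequence is the
forced prefix `a + 1, …, a + b` followed by a partition `μ` with parts `≤ a + b`. The alternating
sum of a weakly decreasing list counts the odd columns of its Young diagram, so the vanishing of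
the alternating sum says that the conjugate of `μ` has exactly `A` odd parts, where `A = b / 2`
for even `b` and `A = a + (b + 1) / 2` for odd `b`. Conjugating `μ` and writing its odd parts as
`2u - 1` and its even parts as `2v` gives the pairs, with `card U = A`.
On the other side, for even `b = 2c` the partitions in `P_{a,b}` have exactly `c` parts larger than
`K = a + c`; subtracting `K` from these gives `U`, and the conjugate of the remaining parts gives
`V`. For odd `b = 2k + 1` the `(k + 1)`-st part equals `K = a + k + 1`; subtracting `K` from the
parts above it gives `V`, and the conjugate of the rest, which has exactly `K` parts, gives `U`.
-/

namespace Finset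

lemma le_card_filter_Icc_iff {p : ℕ → Prop} [DecidablePred p] {B k : ℕ} (hk : 1 ≤ k)
    (hdown : ∀ i j, 1 ≤ i → i ≤ j → p j → p i) (hbound : ∀ i, 1 ≤ i → p i → i ≤ B) :
    k ≤ ((Icc 1 B).filter p).card ↔ p k := by
  constructor
  · intro h
    by_contra hpk
    have hsub : (Icc 1 B).filter p ⊆ Icc 1 (k - 1) := fun i hi => by
      rw [mem_filter, mem_Icc] at hi
      rw [mem_Icc]
      by_contra hik
      exact hpk (hdown k i hk (by omega) hi.2)
    have := card_le_card hsub
    rw [Nat.card_Icc] at this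
    omega
  · intro hpk
    have hsub : Icc 1 k ⊆ (Icc 1 B).filter p := fun i hi => by
      rw [mem_Icc] at hi
      have hpi := hdown i k hi.1 hi.2 hpk
      exact mem_filter.2 ⟨mem_Icc.2 ⟨hi.1, hbound i hi.1 hpi⟩, hpi⟩
    simpa using card_le_card hsub

end Finset

/-! ### Conjugate partitions -/

namespace Multiset

/-- The conjugate of a partition given by its multiset of positive parts: the parts of the
conjugate are the column lengths `S.countP (j ≤ ·)`, `j ≥ 1`, and `S.sum` bounds every part. -/
def conjugate (S : Multiset ℕ) : Multiset ℕ :=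
  ((Finset.Icc 1 S.sum).val.map fun j => S.countP (j ≤ ·)).filter (0 < ·)

variable {S : Multiset ℕ}

lemma antitone_countP_le : Antitone fun k => S.countP (k ≤ ·) := fun j k h => by
  simp only [countP_eq_card_filter]
  exact card_le_card (monotone_filter_right _ fun _ hx => h.trans hx)

lemma countP_le_eq_count_add (m : ℕ) :
    S.countP (m ≤ ·) = S.count m + S.countP (m + 1 ≤ ·) := by
  induction S using Multiset.induction with
  | empty => simp
  | cons a S ih =>
    simp only [countP_cons, count_cons, ih]
    split_ifs <;> omega

lemma eq_of_countP_le_eq {T : Multiset ℕ} (hS : ∀ s ∈ S, 0 < s) (hT : ∀ t ∈ T, 0 < t)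
    (h : ∀ k, 1 ≤ k → S.countP (k ≤ ·) = T.countP (k ≤ ·)) : S = T := by
  ext m
  rcases Nat.eq_zero_or_pos m with rfl | hm
  · rw [count_eq_zero.2 fun h0 => (hS 0 h0).false, count_eq_zero.2 fun h0 => (hT 0 h0).false]
  · have hm0 := h m hm
    have hm1 := h (m + 1) (by omega)
    rw [countP_le_eq_count_add (S := S), countP_le_eq_count_add (S := T)] at hm0
    omega

lemma mem_filter_Icc_countP_pos_iff {B j : ℕ} (hB : ∀ s ∈ S, s ≤ B) :
    j ∈ (Finset.Icc 1 B).filter (fun j => 0 < S.countP (j ≤ ·)) ↔ 1 ≤ j ∧ ∃ s ∈ S, j ≤ s := by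
  simp only [Finset.mem_filter, Finset.mem_Icc, countP_pos]
  constructor
  · exact fun ⟨⟨h1, _⟩, h⟩ => ⟨h1, h⟩
  · rintro ⟨h1, s, hs, hjs⟩
    exact ⟨⟨h1, hjs.trans (hB s hs)⟩, s, hs, hjs⟩

lemma conjugate_eq_of_le {B : ℕ} (hB : ∀ s ∈ S, s ≤ B) :
    conjugate S = ((Finset.Icc 1 B).val.map fun j => S.countP (j ≤ ·)).filter (0 < ·) := by
  have hfilter : (Finset.Icc 1 S.sum).filter (fun j => 0 < S.countP (j ≤ ·)) =
      (Finset.Icc 1 B).filter (fun j => 0 < S.countP (j ≤ ·)) := by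
    ext j
    rw [mem_filter_Icc_countP_pos_iff fun s hs => le_sum_of_mem hs,
      mem_filter_Icc_countP_pos_iff hB]
  rw [conjugate, filter_map, filter_map, ← Finset.filter_val, ← Finset.filter_val]
  exact congrArg (fun F : Finset ℕ => F.val.map _) hfilter

lemma pos_of_mem_conjugate {y : ℕ} (hy : y ∈ conjugate S) : 0 < y :=
  (mem_filter.1 hy).2

lemma sum_countP_le {B : ℕ} (hB : ∀ s ∈ S, s ≤ B) :
    ∑ j ∈ Finset.Icc 1 B, S.countP (j ≤ ·) = S.sum := by
  induction S using Multiset.induction with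
  | empty => simp
  | cons a S ih =>
    have hS : ∀ s ∈ S, s ≤ B := fun s hs => hB s (mem_cons_of_mem hs)
    have hIcc : (Finset.Icc 1 B).filter (· ≤ a) = Finset.Icc 1 a := by
      ext x
      simp only [Finset.mem_filter, Finset.mem_Icc]
      have := hB a (mem_cons_self a S)
      omega
    simp only [countP_cons, Finset.sum_add_distrib, ih hS, sum_cons, ← Finset.card_filter, hIcc,
      Nat.card_Icc]
    omega

lemma sum_conjugate (S : Multiset ℕ) : (conjugate S).sum = S.sum := by
  set X := (Finset.Icc 1 S.sum).val.map fun j => S.countP (j ≤ ·)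
  have hzero : (X.filter (¬ 0 < ·)).sum = 0 :=
    sum_eq_zero fun x hx => by have := (mem_filter.1 hx).2; omega
  have hsplit := congrArg sum (filter_add_not (0 < ·) X)
  rw [sum_add, hzero, add_zero] at hsplit
  calc (conjugate S).sum = X.sum := hsplit
    _ = S.sum := sum_countP_le fun s hs => le_sum_of_mem hs

lemma countP_le_conjugate {B k : ℕ} (hB : ∀ s ∈ S, s ≤ B) (hk : 1 ≤ k) :
    (conjugate S).countP (k ≤ ·) =
      ((Finset.Icc 1 B).filter fun j => k ≤ S.countP (j ≤ ·)).card := by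
  rw [conjugate_eq_of_le hB, countP_filter, countP_map, Finset.card_def, Finset.filter_val]
  congr 2
  ext j
  omega

/-- Cell `(j, k)` is in the diagram of the conjugate iff `(k, j)` is in the diagram of `S`. -/
lemma le_countP_conjugate_iff {j k : ℕ} (hj : 1 ≤ j) (hk : 1 ≤ k) :
    k ≤ (conjugate S).countP (j ≤ ·) ↔ j ≤ S.countP (k ≤ ·) := by
  rw [countP_le_conjugate (fun s hs => le_sum_of_mem hs) hj]
  refine Finset.le_card_filter_Icc_iff hk (fun i i' _ hii' hp => hp.trans (antitone_countP_le hii'))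
    fun i _ hp => ?_
  obtain ⟨s, hs, his⟩ := countP_pos.1 (show 0 < S.countP (i ≤ ·) by omega)
  exact his.trans (le_sum_of_mem hs)

lemma conjugate_conjugate (hS : ∀ s ∈ S, 0 < s) : conjugate (conjugate S) = S := by
  refine eq_of_countP_le_eq (fun _ => pos_of_mem_conjugate) hS fun k hk => ?_
  refine eq_of_forall_le_iff fun m => ?_
  rcases Nat.eq_zero_or_pos m with rfl | hm
  · simp
  · rw [le_countP_conjugate_iff hk hm, le_countP_conjugate_iff hm hk]

lemma le_card_conjugate_iff {k : ℕ} (hk : 1 ≤ k) : k ≤ card (conjugate S) ↔ ∃ s ∈ S, k ≤ s := by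
  have hcard : (conjugate S).countP (1 ≤ ·) = card (conjugate S) :=
    countP_eq_card.2 fun _ => pos_of_mem_conjugate
  rw [← hcard, le_countP_conjugate_iff le_rfl hk, Nat.one_le_iff_ne_zero, ← Nat.pos_iff_ne_zero,
    countP_pos]

lemma card_conjugate_le_iff {P : ℕ} : card (conjugate S) ≤ P ↔ ∀ s ∈ S, s ≤ P := by
  rw [← not_lt, Nat.lt_iff_add_one_le, le_card_conjugate_iff (Nat.le_add_left 1 P)]
  simp only [not_exists, not_and, not_le, Nat.lt_add_one_iff]

lemma forall_mem_conjugate_le_iff (hS : ∀ s ∈ S, 0 < s) {P : ℕ} :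
    (∀ y ∈ conjugate S, y ≤ P) ↔ card S ≤ P := by
  rw [← card_conjugate_le_iff, conjugate_conjugate hS]

lemma card_filter_odd_conjugate {B : ℕ} (hB : ∀ s ∈ S, s ≤ B) :
    card ((conjugate S).filter Odd) = ∑ j ∈ Finset.Icc 1 B, S.countP (j ≤ ·) % 2 := by
  have hodd : ∀ x : ℕ, (Odd x ∧ 0 < x) ↔ Odd x := fun x => ⟨And.left, fun h => ⟨h, h.pos⟩⟩
  rw [conjugate_eq_of_le hB, filter_filter, filter_congr fun x _ => hodd x, filter_map, card_map,
    ← Finset.filter_val, ← Finset.card_def, Finset.card_filter]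
  refine Finset.sum_congr rfl fun j _ => ?_
  simp only [Function.comp_apply]
  split_ifs with h
  · exact (Nat.odd_iff.1 h).symm
  · exact (Nat.not_odd_iff.1 h).symm

lemma bijOn_conjugate :
    Set.BijOn conjugate {S : Multiset ℕ | ∀ s ∈ S, 0 < s} {S | ∀ s ∈ S, 0 < s} :=
  Set.InvOn.bijOn ⟨fun _ hS => conjugate_conjugate hS, fun _ hS => conjugate_conjugate hS⟩
    (fun _ _ _ => pos_of_mem_conjugate) fun _ _ _ => pos_of_mem_conjugate

lemma bijOn_conjugate_of_le (K : ℕ) :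
    Set.BijOn conjugate {W | ∀ v ∈ W, 0 < v ∧ v ≤ K} {U | (∀ u ∈ U, 0 < u) ∧ card U ≤ K} := by
  refine Set.InvOn.bijOn (f' := conjugate) ⟨fun W hW => conjugate_conjugate fun v hv => (hW v hv).1,
    fun U hU => conjugate_conjugate hU.1⟩ (fun W hW => ⟨fun _ => pos_of_mem_conjugate, ?_⟩)
    fun U hU v hv => ⟨pos_of_mem_conjugate hv, (forall_mem_conjugate_le_iff hU.1).2 hU.2 v hv⟩
  exact card_conjugate_le_iff.2 fun v hv => (hW v hv).2

end Multiset

lemma Set.ncard_sep_eq_of_bijOn {α β : Type*} {F : α → β} {s : Set α} {t : Set β}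
    (h : Set.BijOn F s t) {P : α → Prop} {Q : β → Prop} (hPQ : ∀ x ∈ s, P x ↔ Q (F x)) :
    {x | x ∈ s ∧ P x}.ncard = {y | y ∈ t ∧ Q y}.ncard := by
  refine Set.BijOn.ncard_eq ⟨fun x hx => ⟨h.mapsTo hx.1, (hPQ x hx.1).1 hx.2⟩,
    h.injOn.mono fun _ hx => hx.1, fun y hy => ?_⟩
  obtain ⟨x, hx, rfl⟩ := h.surjOn hy.1
  exact ⟨x, ⟨hx, (hPQ x hx).2 hy.2⟩, rfl⟩

lemma Set.bijOn_prod_swap {α β : Type*} (s : Set α) (t : Set β) :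
    Set.BijOn Prod.swap (s ×ˢ t) (t ×ˢ s) :=
  Set.InvOn.bijOn (f' := Prod.swap) ⟨fun _ _ => rfl, fun _ _ => rfl⟩ (fun _ h => ⟨h.2, h.1⟩)
    fun _ h => ⟨h.2, h.1⟩

namespace Multiset

variable {α β γ : Type*}

lemma map_map_eq_self {f : α → β} {g : β → α} {s : Multiset α} (h : ∀ x ∈ s, g (f x) = x) :
    (s.map f).map g = s := by
  rw [map_map]
  exact (map_congr rfl h).trans (map_id s)

lemma filter_add_eq_left {p : α → Prop} [DecidablePred p] {s t : Multiset α}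
    (hs : ∀ x ∈ s, p x) (ht : ∀ x ∈ t, ¬ p x) : (s + t).filter p = s := by
  rw [filter_add, filter_eq_self.2 hs, filter_eq_nil.2 ht, add_zero]

lemma mul_sum_map_add {f : ℕ → ℕ} {s : Multiset ℕ} {m c d : ℕ}
    (h : ∀ x ∈ s, m * f x + d = x + c) :
    m * (s.map f).sum + card s * d = s.sum + card s * c := by
  induction s using Multiset.induction with
  | empty => simp
  | cons a s ih =>
    have ha := h a (mem_cons_self a s)
    have ih := ih fun x hx => h x (mem_cons_of_mem hx)
    simp only [map_cons, sum_cons, card_cons, mul_add, add_mul, one_mul]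
    omega

lemma bijOn_filter_map (p : α → Prop) [DecidablePred p] {A : α → Prop} {B : β → Prop}
    {C : γ → Prop} {f : α → β} {f' : β → α} {g : α → γ} {g' : γ → α}
    (hf : ∀ x, A x → p x → B (f x) ∧ f' (f x) = x)
    (hg : ∀ x, A x → ¬ p x → C (g x) ∧ g' (g x) = x)
    (hf' : ∀ u, B u → A (f' u) ∧ p (f' u) ∧ f (f' u) = u)
    (hg' : ∀ v, C v → A (g' v) ∧ ¬ p (g' v) ∧ g (g' v) = v) :
    Set.BijOn (fun Y : Multiset α => ((Y.filter p).map f, (Y.filter (¬ p ·)).map g))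
      {Y | ∀ y ∈ Y, A y} ({U | ∀ u ∈ U, B u} ×ˢ {V | ∀ v ∈ V, C v}) := by
  refine Set.InvOn.bijOn (f' := fun q => q.1.map f' + q.2.map g') ⟨fun Y hY => ?_, fun q hq => ?_⟩
    (fun Y hY => ⟨fun u hu => ?_, fun v hv => ?_⟩) fun q hq y hy => ?_
  · dsimp only
    rw [map_map_eq_self, map_map_eq_self, filter_add_not]
    · exact fun x hx => (hg x (hY x (mem_of_mem_filter hx)) (mem_filter.1 hx).2).2
    · exact fun x hx => (hf x (hY x (mem_of_mem_filter hx)) (mem_filter.1 hx).2).2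
  · have hpf' : ∀ x ∈ q.1.map f', p x := by
      simp only [mem_map]
      rintro _ ⟨u, hu, rfl⟩
      exact (hf' u (hq.1 u hu)).2.1
    have hpg' : ∀ x ∈ q.2.map g', ¬ p x := by
      simp only [mem_map]
      rintro _ ⟨v, hv, rfl⟩
      exact (hg' v (hq.2 v hv)).2.1
    dsimp only
    rw [filter_add_eq_left hpf' hpg', add_comm, filter_add_eq_left (p := (¬ p ·)) hpg'
      (by simpa using hpf'), map_map_eq_self fun u hu => (hf' u (hq.1 u hu)).2.2,
      map_map_eq_self fun v hv => (hg' v (hq.2 v hv)).2.2]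
  · obtain ⟨x, hx, rfl⟩ := mem_map.1 hu
    exact (hf x (hY x (mem_of_mem_filter hx)) (mem_filter.1 hx).2).1
  · obtain ⟨x, hx, rfl⟩ := mem_map.1 hv
    exact (hg x (hY x (mem_of_mem_filter hx)) (mem_filter.1 hx).2).1
  · rcases mem_add.1 hy with hy | hy <;> obtain ⟨z, hz, rfl⟩ := mem_map.1 hy
    · exact (hf' z (hq.1 z hz)).1
    · exact (hg' z (hq.2 z hz)).1

end Multiset

open Multiset

/-! ### Entries and alternating sums of lists -/

section Entries

variable {l : List ℕ}

lemma entry_add_one (l : List ℕ) (i : ℕ) : entry l (i + 1) = l.getD i 0 := rfl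

lemma entry_drop (l : List ℕ) (m : ℕ) {i : ℕ} (hi : 1 ≤ i) :
    entry (l.drop m) i = entry l (m + i) := by
  obtain ⟨i, rfl⟩ := Nat.exists_eq_add_of_le' hi
  simp [entry_add_one, List.getD_eq_getElem?_getD, ← add_assoc]

lemma entry_append_left (l l' : List ℕ) {i : ℕ} (hi : 1 ≤ i) (hil : i ≤ l.length) :
    entry (l ++ l') i = entry l i :=
  List.getD_append _ _ _ _ (by omega)

lemma entry_range' {s n i : ℕ} (hi : 1 ≤ i) (hin : i ≤ n) :
    entry (List.range' s n) i = s + i - 1 := by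
  obtain ⟨i, rfl⟩ := Nat.exists_eq_add_of_le' hi
  rw [entry_add_one, List.getD_eq_getElem _ _ (by simpa using hin), List.getElem_range']
  omega

lemma forall_entry_pos_iff :
    (∀ i, 1 ≤ i → i ≤ l.length → 1 ≤ entry l i) ↔ ∀ x ∈ l, 0 < x := by
  rw [List.forall_mem_iff_getElem]
  constructor
  · intro h i hi
    have := h (i + 1) (by omega) (by omega)
    rwa [entry_add_one, List.getD_eq_getElem _ _ hi] at this
  · intro h i hi1 hil
    obtain ⟨i, rfl⟩ := Nat.exists_eq_add_of_le' hi1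
    rw [entry_add_one, List.getD_eq_getElem _ _ (by omega)]
    exact h i _

lemma pairwise_ge_iff_entry :
    l.Pairwise (· ≥ ·) ↔ ∀ i j, 1 ≤ i → i ≤ j → j ≤ l.length → entry l j ≤ entry l i := by
  rw [List.pairwise_iff_getElem]
  constructor
  · intro h i j hi hij hj
    obtain ⟨i, rfl⟩ := Nat.exists_eq_add_of_le' hi
    obtain ⟨j, rfl⟩ := Nat.exists_eq_add_of_le' (hi.trans hij)
    rw [entry_add_one, entry_add_one, List.getD_eq_getElem _ _ (by omega),
      List.getD_eq_getElem _ _ (by omega)]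
    rcases Nat.lt_or_ge i j with hlt | hge
    · exact h i j _ _ hlt
    · obtain rfl : i = j := by omega
      exact le_rfl
  · intro h i j hi hj hij
    have := h (i + 1) (j + 1) (by omega) (by omega) (by omega)
    rwa [entry_add_one, entry_add_one, List.getD_eq_getElem _ _ hi,
      List.getD_eq_getElem _ _ hj] at this

lemma entry_antitone_from_iff {m : ℕ} (hm : 1 ≤ m) :
    (∀ i j, m ≤ i → i ≤ j → j ≤ l.length → entry l j ≤ entry l i) ↔
      (l.drop (m - 1)).Pairwise (· ≥ ·) := by
  rw [pairwise_ge_iff_entry, List.length_drop]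
  constructor
  · intro h i j hi hij hj
    rw [entry_drop _ _ hi, entry_drop _ _ (hi.trans hij)]
    exact h _ _ (by omega) (by omega) (by omega)
  · intro h i j hi hij hj
    have := h (i - (m - 1)) (j - (m - 1)) (by omega) (by omega) (by omega)
    rwa [entry_drop _ _ (by omega), entry_drop _ _ (by omega), Nat.add_sub_cancel' (by omega),
      Nat.add_sub_cancel' (by omega)] at this

lemma entry_le_of_forall_le {L : List ℕ} {B : ℕ} (h : ∀ y ∈ L, y ≤ B) (i : ℕ) : entry L i ≤ B := by
  rcases lt_or_ge (i - 1) L.length with hi | hi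
  · rw [entry, List.getD_eq_getElem _ _ hi]
    exact h _ (List.getElem_mem hi)
  · rw [entry, List.getD_eq_default _ _ hi]
    exact Nat.zero_le B

lemma le_entry_iff_le_countP {L : List ℕ} (hL : L.Pairwise (· ≥ ·)) {c v : ℕ} (hc : 1 ≤ c)
    (hv : 1 ≤ v) : v ≤ entry L c ↔ c ≤ (L : Multiset ℕ).countP (v ≤ ·) := by
  induction L generalizing c with
  | nil => simp [entry]; omega
  | cons x t ih =>
    rw [List.pairwise_cons] at hL
    rw [← Multiset.cons_coe, countP_cons]
    by_cases hvx : v ≤ x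
    · rcases c with _ | _ | c
      · omega
      · simp [entry, hvx]
      · rw [show entry (x :: t) (c + 2) = entry t (c + 1) from rfl, ih hL.2 (by omega), if_pos hvx]
        omega
    · have hzero : (t : Multiset ℕ).countP (v ≤ ·) = 0 :=
        countP_eq_zero.2 fun y hy => by have := hL.1 y (by simpa using hy); omega
      have hentry : entry (x :: t) c ≤ x :=
        entry_le_of_forall_le (List.forall_mem_cons.2 ⟨le_rfl, hL.1⟩) c
      rw [hzero, if_neg hvx]
      omega

end Entries

lemma sum_range_neg_one_pow_mul_getD (L : List ℕ) :
    ∑ i ∈ Finset.range L.length, (-1 : ℤ) ^ i * L.getD i 0 =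
      (L.map fun x : ℕ => (x : ℤ)).alternatingSum := by
  induction L with
  | nil => simp
  | cons x t ih =>
    rw [List.length_cons, Finset.sum_range_succ', List.map_cons, List.alternatingSum_cons, ← ih]
    simp only [pow_succ, List.getD_cons_succ, List.getD_cons_zero, pow_zero, one_mul, mul_neg_one,
      neg_mul, Finset.sum_neg_distrib]
    ring

lemma altSum_length_eq (d : List ℕ) :
    altSum d d.length = -(d.map fun x : ℕ => (x : ℤ)).alternatingSum := by
  rw [altSum, ← sum_range_neg_one_pow_mul_getD, ← Finset.Ico_add_one_right_eq_Icc,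
    Finset.sum_Ico_eq_sum_range, Nat.add_sub_cancel, ← Finset.sum_neg_distrib]
  refine Finset.sum_congr rfl fun i _ => ?_
  rw [add_comm 1 i, entry_add_one, pow_succ]
  ring

lemma List.alternatingSum_range'_two_mul (s c : ℕ) :
    ((List.range' s (2 * c)).map fun x : ℕ => (x : ℤ)).alternatingSum = -c := by
  induction c generalizing s with
  | zero => simp
  | succ c ih =>
    rw [show 2 * (c + 1) = 2 * c + 1 + 1 by ring, List.range'_succ, List.range'_succ,
      List.map_cons, List.map_cons, List.alternatingSum_cons, List.alternatingSum_cons, ih]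
    push_cast
    ring

lemma List.alternatingSum_range'_two_mul_add_one (s k : ℕ) :
    ((List.range' s (2 * k + 1)).map fun x : ℕ => (x : ℤ)).alternatingSum = s + k := by
  rw [List.range'_succ, List.map_cons, List.alternatingSum_cons, alternatingSum_range'_two_mul]
  ring

lemma List.two_mul_sum_range'_add (s n : ℕ) : 2 * (List.range' s n).sum + n = n * (2 * s + n) := by
  induction n with
  | zero => simp
  | succ n ih =>
    rw [List.range'_concat, List.sum_append, List.sum_singleton]
    linarith

lemma alternatingSum_eq_sum_countP_mod_two {μ : List ℕ} (hμ : μ.Pairwise (· ≥ ·)) {B : ℕ}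
    (hB : ∀ x ∈ μ, x ≤ B) :
    (μ.map fun x : ℕ => (x : ℤ)).alternatingSum =
      ∑ j ∈ Finset.Icc 1 B, (((μ : Multiset ℕ).countP (j ≤ ·) % 2 : ℕ) : ℤ) := by
  induction μ with
  | nil => simp
  | cons x t ih =>
    rw [List.pairwise_cons] at hμ
    have hxB := hB x List.mem_cons_self
    -- the new part `x` flips the parity of exactly the columns `j ≤ x`
    have hterm : ∀ j ∈ Finset.Icc 1 B, (x :: t : Multiset ℕ).countP (j ≤ ·) % 2 +
        (t : Multiset ℕ).countP (j ≤ ·) % 2 = if j ≤ x then 1 else 0 := fun j _ => by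
      rw [← Multiset.cons_coe, countP_cons]
      split_ifs with hjx
      · omega
      · have : (t : Multiset ℕ).countP (j ≤ ·) = 0 :=
          countP_eq_zero.2 fun y hy => by have := hμ.1 y (by simpa using hy); omega
        simp [this]
    have hsum : ∑ j ∈ Finset.Icc 1 B, ((x :: t : Multiset ℕ).countP (j ≤ ·) % 2 +
        (t : Multiset ℕ).countP (j ≤ ·) % 2) = x := by
      rw [Finset.sum_congr rfl hterm, Finset.sum_boole, Nat.cast_id,
        show (Finset.Icc 1 B).filter (· ≤ x) = Finset.Icc 1 x by ext; simp; omega, Nat.card_Icc]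
      omega
    rw [List.map_cons, List.alternatingSum_cons, ih hμ.2 fun y hy => (hμ.1 y hy).trans hxB]
    rw [Finset.sum_add_distrib] at hsum
    have := congrArg (Nat.cast : ℕ → ℤ) hsum
    simp only [Nat.cast_add, Nat.cast_sum] at this
    linarith

lemma alternatingSum_eq_card_filter_odd_conjugate {μ : List ℕ} (hμ : μ.Pairwise (· ≥ ·)) :
    (μ.map fun x : ℕ => (x : ℤ)).alternatingSum =
      card ((conjugate (μ : Multiset ℕ)).filter Odd) := by
  have hB : ∀ x ∈ μ, x ≤ μ.sum := fun x hx => List.le_sum_of_mem hx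
  rw [alternatingSum_eq_sum_countP_mod_two hμ hB, card_filter_odd_conjugate (B := μ.sum)
    fun x hx => hB x (by simpa using hx)]
  push_cast
  rfl

lemma ncard_sorted_list_eq (P : Multiset ℕ → Prop) :
    {L : List ℕ | L.Pairwise (· ≥ ·) ∧ P L}.ncard = {S : Multiset ℕ | P S}.ncard := by
  refine Set.BijOn.ncard_eq (f := ((↑) : List ℕ → Multiset ℕ)) <| Set.InvOn.bijOn
    (f' := fun S => S.sort (· ≥ ·)) ⟨fun L hL => ?_, fun S _ => sort_eq S _⟩ (fun L hL => hL.2)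
    fun S hS => ⟨pairwise_sort S _, by rwa [sort_eq]⟩
  exact List.Perm.eq_of_pairwise' (pairwise_sort _ _) hL.1 (by rw [← coe_eq_coe, sort_eq])

/-! ### `(a, b)`-sequences -/

section ABSeq

variable {a b : ℕ}

lemma IsABSeq.take_eq {d : List ℕ} (h : IsABSeq a b d) : d.take b = List.range' (a + 1) b := by
  obtain ⟨-, hlen, -, hprefix, -⟩ := h
  refine List.ext_getElem (by simpa using hlen) fun i hi _ => ?_
  rw [List.length_take] at hi
  have := hprefix (i + 1) (by omega) (by omega)
  rw [entry_add_one, List.getD_eq_getElem _ _ (by omega)] at this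
  rw [List.getElem_take, this, List.getElem_range']
  omega

lemma ncard_abSeq_eq_ncard_tails (P : List ℕ → Prop) :
    {d | IsABSeq a b d ∧ P d}.ncard =
      {μ | IsABSeq a b (List.range' (a + 1) b ++ μ) ∧ P (List.range' (a + 1) b ++ μ)}.ncard := by
  refine (Set.BijOn.ncard_eq (f := (List.range' (a + 1) b ++ ·)) ⟨fun μ hμ => hμ,
    fun μ _ ν _ h => List.append_cancel_left h, fun d hd => ?_⟩).symm
  have hd' : List.range' (a + 1) b ++ d.drop b = d := by rw [← hd.1.take_eq, List.take_append_drop]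
  exact ⟨d.drop b, show IsABSeq a b (_ ++ _) ∧ P (_ ++ _) by rwa [hd'], hd'⟩

lemma isABSeq_range'_append_iff (hb : 1 ≤ b) {μ : List ℕ} :
    IsABSeq a b (List.range' (a + 1) b ++ μ) ↔
      μ.Pairwise (· ≥ ·) ∧ (∀ x ∈ μ, 0 < x) ∧ (∀ x ∈ μ, x ≤ a + b) ∧
        ((List.range' (a + 1) b ++ μ).map fun x : ℕ => (x : ℤ)).alternatingSum = 0 := by
  have hdrop : (List.range' (a + 1) b ++ μ).drop (b - 1) = (a + b) :: μ := by
    obtain ⟨c, rfl⟩ := Nat.exists_eq_add_of_le' hb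
    rw [Nat.add_sub_cancel, List.range'_concat, List.append_assoc, List.drop_left' (by simp)]
    simp only [List.singleton_append, List.cons.injEq, and_true]
    omega
  have hprefix : ∀ i, 1 ≤ i → i ≤ b → entry (List.range' (a + 1) b ++ μ) i = a + i :=
    fun i hi hib => by
      rw [entry_append_left _ _ hi (by simpa using hib), entry_range' hi hib]
      omega
  rw [IsABSeq, forall_entry_pos_iff, entry_antitone_from_iff hb, hdrop, altSum_length_eq]
  simp only [List.pairwise_cons, List.mem_append, List.mem_range', List.length_append,
    List.length_range', neg_eq_zero]
  constructor
  · rintro ⟨-, -, hpos, -, ⟨hbound, hsorted⟩, halt⟩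
    exact ⟨hsorted, fun x hx => hpos x (Or.inr hx), hbound, halt⟩
  · rintro ⟨hsorted, hpos, hbound, halt⟩
    refine ⟨hb, by omega, ?_, hprefix, ⟨hbound, hsorted⟩, halt⟩
    rintro x (⟨i, -, rfl⟩ | hx)
    · omega
    · exact hpos x hx

lemma ncard_tails_eq (hb : 1 ≤ b) (n A : ℕ)
    (hA : ((List.range' (a + 1) b).map fun x : ℕ => (x : ℤ)).alternatingSum = (-1) ^ (b + 1) * A) :
    {μ | IsABSeq a b (List.range' (a + 1) b ++ μ) ∧
      (List.range' (a + 1) b ++ μ).sum = 2 * n}.ncard =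
    {X : Multiset ℕ | (∀ x ∈ X, 0 < x) ∧ (∀ x ∈ X, x ≤ a + b) ∧
      card ((conjugate X).filter Odd) = A ∧ (List.range' (a + 1) b).sum + X.sum = 2 * n}.ncard := by
  rw [← ncard_sorted_list_eq]
  congr 1
  ext μ
  simp only [Set.mem_ofPred_eq, isABSeq_range'_append_iff hb, List.sum_append, mem_coe, sum_coe]
  have halt : ((List.range' (a + 1) b ++ μ).map fun x : ℕ => (x : ℤ)).alternatingSum =
      (-1) ^ b * ((μ.map fun x : ℕ => (x : ℤ)).alternatingSum - A) := by
    rw [List.map_append, List.alternatingSum_append, hA, List.length_map, List.length_range']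
    ring
  constructor
  · rintro ⟨⟨hsorted, hpos, hbound, hzero⟩, hsum⟩
    rw [halt, mul_eq_zero, sub_eq_zero, alternatingSum_eq_card_filter_odd_conjugate hsorted]
      at hzero
    exact ⟨hsorted, hpos, hbound, by exact_mod_cast hzero.resolve_left (by simp), hsum⟩
  · rintro ⟨hsorted, hpos, hbound, hodd, hsum⟩
    refine ⟨⟨hsorted, hpos, hbound, ?_⟩, hsum⟩
    rw [halt, alternatingSum_eq_card_filter_odd_conjugate hsorted, hodd, sub_self, mul_zero]

lemma ncard_conjugate_eq (P A S m : ℕ) :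
    {X : Multiset ℕ | (∀ x ∈ X, 0 < x) ∧ (∀ x ∈ X, x ≤ P) ∧
      card ((conjugate X).filter Odd) = A ∧ S + X.sum = m}.ncard =
    {Y : Multiset ℕ | (∀ y ∈ Y, 0 < y) ∧ card Y ≤ P ∧
      card (Y.filter Odd) = A ∧ S + Y.sum = m}.ncard :=
  Set.ncard_sep_eq_of_bijOn bijOn_conjugate fun X _ => by
    rw [card_conjugate_le_iff, sum_conjugate]

/-- Odd parts `2u - 1` become the parts `u` of `q.1`, even parts `2v` the parts `v` of `q.2`. -/
lemma ncard_odd_even_split (P A S m : ℕ) :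
    {Y : Multiset ℕ | (∀ y ∈ Y, 0 < y) ∧ card Y ≤ P ∧
      card (Y.filter Odd) = A ∧ S + Y.sum = m}.ncard =
    {q : Multiset ℕ × Multiset ℕ | ((∀ u ∈ q.1, 0 < u) ∧ ∀ v ∈ q.2, 0 < v) ∧
      card q.1 = A ∧ A + card q.2 ≤ P ∧ S + 2 * (q.1.sum + q.2.sum) = m + A}.ncard := by
  have hbij := bijOn_filter_map Odd (A := (0 < ·)) (B := (0 < ·)) (C := (0 < ·))
    (f := fun o => (o + 1) / 2) (f' := fun u => 2 * u - 1) (g := (· / 2)) (g' := (2 * ·))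
    (fun x _ h => by rw [Nat.odd_iff] at h; omega)
    (fun x hx h => by rw [Nat.odd_iff] at h; omega)
    (fun u hu => by simp only [Nat.odd_iff]; omega)
    (fun v hv => by simp only [Nat.odd_iff]; omega)
  refine Set.ncard_sep_eq_of_bijOn hbij fun Y _ => ?_
  have hcard := card_eq_countP_add_countP Odd Y
  have hsum := congrArg sum (filter_add_not Odd Y)
  have hodd := mul_sum_map_add (s := Y.filter Odd) (f := fun o => (o + 1) / 2) (m := 2) (c := 1)
    (d := 0) fun x hx => by have := (mem_filter.1 hx).2; rw [Nat.odd_iff] at this; omega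
  have heven := mul_sum_map_add (s := Y.filter (¬ Odd ·)) (f := (· / 2)) (m := 2) (c := 0)
    (d := 0) fun x hx => by have := (mem_filter.1 hx).2; rw [Nat.odd_iff] at this; omega
  simp only [countP_eq_card_filter, card_map, sum_add] at hcard hsum ⊢
  constructor <;> rintro ⟨h1, h2, h3⟩ <;> refine ⟨by omega, by omega, by omega⟩

lemma ncard_abSeq_eq_ncard_pairs (hb : 1 ≤ b) (n A : ℕ)
    (hA : ((List.range' (a + 1) b).map fun x : ℕ => (x : ℤ)).alternatingSum = (-1) ^ (b + 1) * A) :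
    {d | IsABSeq a b d ∧ d.sum = 2 * n}.ncard =
    {q : Multiset ℕ × Multiset ℕ | ((∀ u ∈ q.1, 0 < u) ∧ ∀ v ∈ q.2, 0 < v) ∧ card q.1 = A ∧
      A + card q.2 ≤ a + b ∧
      (List.range' (a + 1) b).sum + 2 * (q.1.sum + q.2.sum) = 2 * n + A}.ncard := by
  rw [ncard_abSeq_eq_ncard_tails (·.sum = 2 * n), ncard_tails_eq hb n A hA, ncard_conjugate_eq,
    ncard_odd_even_split]

end ABSeq

/-! ### Partitions with a prescribed Durfee rectangle -/

section SplitAt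

variable (K : ℕ)

lemma bijOn_split_at :
    Set.BijOn
      (fun Λ : Multiset ℕ =>
        ((Λ.filter (K < ·)).map (· - K), (Λ.filter (¬ K < ·)).map fun x => x))
      {Λ | ∀ x ∈ Λ, 0 < x} ({U | ∀ u ∈ U, 0 < u} ×ˢ {W | ∀ v ∈ W, 0 < v ∧ v ≤ K}) :=
  bijOn_filter_map (K < ·) (f' := (· + K)) (g' := fun x => x)
    (fun x _ h => ⟨by omega, Nat.sub_add_cancel h.le⟩) (fun x hx h => ⟨⟨hx, by omega⟩, rfl⟩)
    (fun u hu => ⟨by omega, by omega, by simp⟩) fun v hv => ⟨hv.1, by simp [hv.2], rfl⟩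

variable {K} {Λ : Multiset ℕ}

lemma sum_eq_of_split_at :
    Λ.sum = ((Λ.filter (K < ·)).map (· - K)).sum + (Λ.filter (¬ K < ·)).sum +
      card (Λ.filter (K < ·)) * K := by
  have hbig := mul_sum_map_add (s := Λ.filter (K < ·)) (f := (· - K)) (m := 1) (c := 0) (d := K)
    fun x hx => by have := (mem_filter.1 hx).2; omega
  have hsplit := congrArg sum (filter_add_not (K < ·) Λ)
  rw [sum_add] at hsplit
  linarith

lemma countP_succ_le_eq_card_filter : Λ.countP (K + 1 ≤ ·) = card (Λ.filter (K < ·)) :=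
  countP_eq_card_filter _ _

lemma countP_le_eq_of_split_at :
    Λ.countP (K ≤ ·) = card (Λ.filter (K < ·)) + (Λ.filter (¬ K < ·)).count K := by
  rw [countP_le_eq_count_add, count_filter_of_pos (p := fun x => ¬ K < x) (lt_irrefl K),
    countP_succ_le_eq_card_filter, add_comm]

end SplitAt

lemma ncard_countP_eq_ncard_pairs (K c n : ℕ) :
    {Λ : Multiset ℕ | (∀ x ∈ Λ, 0 < x) ∧ Λ.sum = n ∧ Λ.countP (K + 1 ≤ ·) = c}.ncard =
    {q : Multiset ℕ × Multiset ℕ | ((∀ u ∈ q.1, 0 < u) ∧ (∀ v ∈ q.2, 0 < v) ∧ card q.2 ≤ K) ∧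
      card q.1 = c ∧ q.1.sum + q.2.sum + c * K = n}.ncard := by
  refine Set.ncard_sep_eq_of_bijOn (((Set.bijOn_id {U : Multiset ℕ | ∀ u ∈ U, 0 < u}).prodMap
    (bijOn_conjugate_of_le K)).comp (bijOn_split_at K)) fun Λ _ => ?_
  have hsum := sum_eq_of_split_at (K := K) (Λ := Λ)
  simp only [Function.comp_apply, id_eq, map_id', sum_conjugate, card_map,
    countP_succ_le_eq_card_filter]
  constructor
  · rintro ⟨rfl, rfl⟩
    exact ⟨rfl, hsum.symm⟩
  · rintro ⟨rfl, rfl⟩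
    exact ⟨hsum, rfl⟩

/-- The bijection removes `k - card q.1` parts equal to `K` from `q.2`. -/
lemma ncard_sub_replicate (K k n : ℕ) :
    {q : Multiset ℕ × Multiset ℕ | ((∀ u ∈ q.1, 0 < u) ∧ ∀ v ∈ q.2, 0 < v ∧ v ≤ K) ∧
      q.1.sum + q.2.sum + card q.1 * K = n ∧ k + 1 ≤ card q.1 + q.2.count K ∧ card q.1 ≤ k}.ncard =
    {q : Multiset ℕ × Multiset ℕ | ((∀ u ∈ q.1, 0 < u) ∧ ∀ v ∈ q.2, 0 < v ∧ v ≤ K) ∧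
      q.1.sum + q.2.sum + k * K = n ∧ K ∈ q.2 ∧ card q.1 ≤ k}.ncard := by
  have hmul : ∀ V : Multiset ℕ, card V ≤ k → (k - card V) * K + card V * K = k * K :=
    fun V h => by rw [← add_mul, Nat.sub_add_cancel h]
  refine Set.BijOn.ncard_eq (f := fun q => (q.1, q.2 - replicate (k - card q.1) K))
    (Set.InvOn.bijOn (f' := fun q => (q.1, q.2 + replicate (k - card q.1) K)) ⟨?_, ?_⟩ ?_ ?_)
  · rintro ⟨V, W⟩ ⟨-, -, hcount, -⟩
    dsimp only at hcount
    simpa using tsub_add_cancel_of_le (le_count_iff_replicate_le.1 (by omega : k - card V ≤ _))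
  · rintro ⟨V, W⟩ -
    simp
  · rintro ⟨V, W⟩ ⟨⟨hV, hW⟩, hsum, hcount, hcard⟩
    dsimp only at hsum hcount hcard ⊢
    have hsumW := congrArg sum (tsub_add_cancel_of_le
      (le_count_iff_replicate_le.1 (by omega : k - card V ≤ W.count K)))
    rw [sum_add, sum_replicate, smul_eq_mul] at hsumW
    have := hmul V hcard
    refine ⟨⟨hV, fun v hv => hW v (mem_of_le tsub_le_self hv)⟩, by dsimp only; linarith, ?_, hcard⟩
    rw [← count_pos, count_sub, count_replicate_self]
    omega
  · rintro ⟨V, W⟩ ⟨⟨hV, hW⟩, hsum, hmem, hcard⟩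
    dsimp only at hsum hmem hcard ⊢
    have := hmul V hcard
    have := count_pos.2 hmem
    refine ⟨⟨hV, fun v hv => ?_⟩, ?_, ?_, hcard⟩
    · rcases mem_add.1 hv with hv | hv
      · exact hW v hv
      · rw [eq_of_mem_replicate hv]
        exact ⟨(hW K hmem).1, le_rfl⟩
    · simp only [sum_add, sum_replicate, smul_eq_mul]
      linarith
    · simp only [count_add, count_replicate_self]
      omega

lemma ncard_countP_bounds_eq_ncard_pairs (K k n : ℕ) (hK : 1 ≤ K) :
    {Λ : Multiset ℕ | (∀ x ∈ Λ, 0 < x) ∧ Λ.sum = n ∧ k + 1 ≤ Λ.countP (K ≤ ·) ∧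
      Λ.countP (K + 1 ≤ ·) ≤ k}.ncard =
    {q : Multiset ℕ × Multiset ℕ | (((∀ u ∈ q.1, 0 < u) ∧ card q.1 ≤ K) ∧ ∀ v ∈ q.2, 0 < v) ∧
      K ≤ card q.1 ∧ card q.2 ≤ k ∧ q.1.sum + q.2.sum + k * K = n}.ncard := by
  calc _ = {q : Multiset ℕ × Multiset ℕ | ((∀ u ∈ q.1, 0 < u) ∧ ∀ v ∈ q.2, 0 < v ∧ v ≤ K) ∧
        q.1.sum + q.2.sum + card q.1 * K = n ∧ k + 1 ≤ card q.1 + q.2.count K ∧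
          card q.1 ≤ k}.ncard :=
        Set.ncard_sep_eq_of_bijOn (bijOn_split_at K) fun Λ _ => by
          rw [sum_eq_of_split_at, countP_le_eq_of_split_at, countP_succ_le_eq_card_filter]
          simp only [map_id', card_map]
          exact Iff.rfl
    _ = _ := ncard_sub_replicate K k n
    _ = _ := Set.ncard_sep_eq_of_bijOn (((bijOn_conjugate_of_le K).prodMap
        (Set.bijOn_id {V : Multiset ℕ | ∀ v ∈ V, 0 < v})).comp (Set.bijOn_prod_swap _ _))
        fun q hq => by
          have hmem : K ∈ q.2 ↔ K ≤ card (conjugate q.2) := by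
            rw [le_card_conjugate_iff hK]
            refine ⟨fun h => ⟨K, h, le_rfl⟩, fun ⟨s, hs, hKs⟩ => ?_⟩
            rwa [le_antisymm hKs (hq.2 s hs).2]
          simp only [Function.comp_apply, Prod.fst_swap, Prod.snd_swap, id_eq, sum_conjugate, hmem]
          constructor <;> rintro ⟨h1, h2, h3⟩ <;> exact ⟨by omega, by omega, by omega⟩

lemma ncard_pab_even (a c n : ℕ) (hc : 1 ≤ c) :
    {L : List ℕ | IsPartitionList L ∧ L.sum = n ∧
      (2 * c + 1) / 2 + a ≤ entry L ((2 * c + 1) / 2) ∧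
      entry L ((2 * c + 1) / 2 + 1) < (2 * c + 1) / 2 + 1 + a ∧
      (Even (2 * c) → a + 2 * c / 2 < entry L (2 * c / 2)) ∧
      (Odd (2 * c) → entry L ((2 * c + 1) / 2) = a + (2 * c + 1) / 2)}.ncard =
    {q : Multiset ℕ × Multiset ℕ | ((∀ u ∈ q.1, 0 < u) ∧ (∀ v ∈ q.2, 0 < v) ∧ card q.2 ≤ a + c) ∧
      card q.1 = c ∧ q.1.sum + q.2.sum + c * (a + c) = n}.ncard := by
  rw [← ncard_countP_eq_ncard_pairs, ← ncard_sorted_list_eq]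
  congr 1
  ext L
  simp only [Set.mem_ofPred_eq, IsPartitionList, mem_coe, sum_coe,
    show (2 * c + 1) / 2 = c by omega, show 2 * c / 2 = c by omega, even_two_mul, true_implies,
    Nat.not_odd_iff_even.2 (even_two_mul c), false_implies, and_true]
  constructor
  · rintro ⟨⟨hsorted, hpos⟩, hsum, -, hlt, hgt⟩
    have hge := (le_entry_iff_le_countP hsorted hc (v := a + c + 1) (by omega)).1 (by omega)
    have hle := (le_entry_iff_le_countP hsorted (c := c + 1) (v := a + c + 1) (by omega)
      (by omega)).not.1 (by omega)
    exact ⟨hsorted, hpos, hsum, by omega⟩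
  · rintro ⟨hsorted, hpos, hsum, hcount⟩
    have hgt := (le_entry_iff_le_countP hsorted hc (v := a + c + 1) (by omega)).2 (by omega)
    have hlt := (le_entry_iff_le_countP hsorted (c := c + 1) (v := a + c + 1) (by omega)
      (by omega)).not.2 (by omega)
    exact ⟨⟨hsorted, hpos⟩, hsum, by omega, by omega, by omega⟩

lemma ncard_pab_odd (a k n : ℕ) :
    {L : List ℕ | IsPartitionList L ∧ L.sum = n ∧
      (2 * k + 1 + 1) / 2 + a ≤ entry L ((2 * k + 1 + 1) / 2) ∧
      entry L ((2 * k + 1 + 1) / 2 + 1) < (2 * k + 1 + 1) / 2 + 1 + a ∧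
      (Even (2 * k + 1) → a + (2 * k + 1) / 2 < entry L ((2 * k + 1) / 2)) ∧
      (Odd (2 * k + 1) → entry L ((2 * k + 1 + 1) / 2) = a + (2 * k + 1 + 1) / 2)}.ncard =
    {q : Multiset ℕ × Multiset ℕ | (((∀ u ∈ q.1, 0 < u) ∧ card q.1 ≤ a + k + 1) ∧
      ∀ v ∈ q.2, 0 < v) ∧ a + k + 1 ≤ card q.1 ∧ card q.2 ≤ k ∧
        q.1.sum + q.2.sum + k * (a + k + 1) = n}.ncard := by
  rw [← ncard_countP_bounds_eq_ncard_pairs (a + k + 1) k n (by omega), ← ncard_sorted_list_eq]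
  congr 1
  ext L
  simp only [Set.mem_ofPred_eq, IsPartitionList, mem_coe, sum_coe,
    show (2 * k + 1 + 1) / 2 = k + 1 by omega, odd_two_mul_add_one, true_implies,
    Nat.not_even_iff_odd.2 (odd_two_mul_add_one k), false_implies, true_and]
  constructor
  · rintro ⟨⟨hsorted, hpos⟩, hsum, -, -, heq⟩
    have hge := (le_entry_iff_le_countP hsorted (c := k + 1) (v := a + k + 1) (by omega)
      (by omega)).1 (by omega)
    have hle := (le_entry_iff_le_countP hsorted (c := k + 1) (v := a + k + 1 + 1) (by omega)
      (by omega)).not.1 (by omega)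
    exact ⟨hsorted, hpos, hsum, hge, by omega⟩
  · rintro ⟨hsorted, hpos, hsum, hge, hle⟩
    have h1 := (le_entry_iff_le_countP hsorted (c := k + 1) (v := a + k + 1) (by omega)
      (by omega)).2 hge
    have h2 := (le_entry_iff_le_countP hsorted (c := k + 1) (v := a + k + 1 + 1) (by omega)
      (by omega)).not.2 (by omega)
    have h3 := (le_entry_iff_le_countP hsorted (c := k + 1 + 1) (v := a + k + 1 + 1) (by omega)
      (by omega)).not.2 (by omega)
    exact ⟨⟨hsorted, hpos⟩, hsum, by omega, by omega, by omega⟩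

/-- Theorem 2.5: the number of `(a,b)`-sequences `Δ` with `|Δ| = 2n` equals the number of
partitions of `n` whose `a`-Durfee rectangle has size `⌈b/2⌉ × (⌈b/2⌉ + a)`, with
`λ_{b/2} > a + b/2` if `b` is even and `λ_{(b+1)/2} = a + (b+1)/2` if `b` is odd. -/
theorem abseq_count_eq_pab_count (a b n : ℕ) (hb : 1 ≤ b) :
    Set.ncard {d : List ℕ | IsABSeq a b d ∧ d.sum = 2 * n} =
    Set.ncard {L : List ℕ | IsPartitionList L ∧ L.sum = n ∧
      (b + 1) / 2 + a ≤ entry L ((b + 1) / 2) ∧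
      entry L ((b + 1) / 2 + 1) < (b + 1) / 2 + 1 + a ∧
      (Even b → a + b / 2 < entry L (b / 2)) ∧
      (Odd b → entry L ((b + 1) / 2) = a + (b + 1) / 2)} := by
  obtain ⟨c, rfl | rfl⟩ := Nat.even_or_odd' b
  · have hsum : (List.range' (a + 1) (2 * c)).sum = 2 * (c * (a + c)) + c := by
      linarith [List.two_mul_sum_range'_add (a + 1) (2 * c)]
    rw [ncard_abSeq_eq_ncard_pairs hb n c (by
        rw [List.alternatingSum_range'_two_mul, pow_succ, pow_mul, neg_one_sq, one_pow]; ring),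
      ncard_pab_even a c n (by omega)]
    congr 1
    ext q
    constructor
    · rintro ⟨⟨h1, h2⟩, h3, h4, h5⟩
      exact ⟨⟨h1, h2, by omega⟩, h3, by omega⟩
    · rintro ⟨⟨h1, h2, h3⟩, h4, h5⟩
      exact ⟨⟨h1, h2⟩, h4, by omega, by omega⟩
  · have hsum : (List.range' (a + 1) (2 * c + 1)).sum = 2 * (c * (a + c + 1)) + (a + c + 1) := by
      linarith [List.two_mul_sum_range'_add (a + 1) (2 * c + 1)]
    rw [ncard_abSeq_eq_ncard_pairs hb n (a + c + 1) (by
        rw [List.alternatingSum_range'_two_mul_add_one, pow_succ, pow_succ, pow_mul, neg_one_sq,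
          one_pow]; push_cast; ring),
      ncard_pab_odd a c n]
    congr 1
    ext q
    constructor
    · rintro ⟨⟨h1, h2⟩, h3, h4, h5⟩
      exact ⟨⟨⟨h1, by omega⟩, h2⟩, by omega, by omega, by omega⟩
    · rintro ⟨⟨⟨h1, h2⟩, h3⟩, h4, h5, h6⟩
      exact ⟨⟨h1, h3⟩, by omega, by omega, by omega⟩
end

section
/- For all integers a ≥ 0, k ≥ 1, and n ≥ 0, the number of (a, 2k)-sequences Δ with |Δ| = 2n equals the number of ordered pairs (μ, ν) of partitions such that every part of μ is at most k, every part of ν is at most a + k, and |μ| + |ν| + k(a + k) + k = n. -/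
/-!
Removing the forced initial segment `a + 1, …, a + 2k` from an `(a, 2k)`-sequence leaves a
partition `E` with parts at most `a + 2k`, weight `2n - k(2a + 2k + 1)` and alternating sum
`E₁ - E₂ + E₃ - ⋯ = k`. That alternating sum counts the odd columns of the Young diagram of `E`,
so the conjugate `C` of `E` has at most `a + 2k` parts, exactly `k` of them odd. Halving the odd
parts of `C` (rounding up) and its even parts gives a partition `α` into exactly `k` parts and a
partition `β` into at most `a + k` parts. Finally `ν` is the conjugate of `β`, and `μ` is the
conjugate of `α` with its largest part, which is `k`, removed.
-/

namespace PartitionList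

variable {L C : List ℕ}

/-- The conjugate partition, when `L` is weakly decreasing. -/
def conj (L : List ℕ) : List ℕ := (List.range (L.headD 0)).map fun c => L.countP (c < ·)

lemma length_conj : (conj L).length = L.headD 0 := by simp [conj]

lemma le_headD_of_mem (hL : L.Pairwise (· ≥ ·)) {x : ℕ} (hx : x ∈ L) : x ≤ L.headD 0 := by
  cases L with
  | nil => simp at hx
  | cons y L =>
    rw [List.pairwise_cons] at hL
    rcases List.mem_cons.1 hx with rfl | hx
    · exact le_rfl
    · exact hL.1 x hx

lemma countP_lt_eq_zero (hL : L.Pairwise (· ≥ ·)) {c : ℕ} (hc : L.headD 0 ≤ c) :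
    L.countP (c < ·) = 0 :=
  List.countP_eq_zero.2 fun x hx => by
    have := le_headD_of_mem hL hx
    simp only [decide_eq_true_eq]
    omega

lemma getD_conj (hL : L.Pairwise (· ≥ ·)) (c : ℕ) : (conj L).getD c 0 = L.countP (c < ·) := by
  by_cases hc : c < L.headD 0
  · rw [List.getD_eq_getElem _ _ (by rw [length_conj]; exact hc)]
    simp [conj]
  · rw [countP_lt_eq_zero hL (by omega), List.getD_eq_default _ _ (by rw [length_conj]; omega)]

lemma getD_le_headD (hL : L.Pairwise (· ≥ ·)) (i : ℕ) : L.getD i 0 ≤ L.headD 0 := by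
  by_cases hi : i < L.length
  · rw [List.getD_eq_getElem _ _ hi]
    exact le_headD_of_mem hL (List.getElem_mem hi)
  · rw [List.getD_eq_default _ _ (by omega)]
    exact Nat.zero_le _

lemma lt_countP_lt_iff (hL : L.Pairwise (· ≥ ·)) {i c : ℕ} :
    i < L.countP (c < ·) ↔ c < L.getD i 0 := by
  induction L generalizing i with
  | nil => simp
  | cons x L ih =>
    by_cases hcx : c < x
    · rcases i with _ | i
      · simp [hcx]
      · simp [hcx, ih (List.pairwise_cons.1 hL).2]
    · rw [countP_lt_eq_zero hL (not_lt.1 hcx)]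
      have := getD_le_headD hL i
      simp only [List.headD_cons] at this
      omega

-- Both sides say that the cell `(i, c)` lies in the Young diagram of `L`.
lemma lt_getD_conj_iff (hL : L.Pairwise (· ≥ ·)) {i c : ℕ} :
    i < (conj L).getD c 0 ↔ c < L.getD i 0 := by
  rw [getD_conj hL, lt_countP_lt_iff hL]

lemma isPartitionList_conj (L : List ℕ) : IsPartitionList (conj L) := by
  refine ⟨?_, ?_⟩
  · simp only [conj, List.pairwise_map]
    refine List.pairwise_lt_range.imp fun {c d} hcd => ?_
    exact List.countP_mono_left fun x _ hx => by simp at hx ⊢; omega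
  · simp only [conj, List.mem_map, List.mem_range]
    rintro _ ⟨c, hc, rfl⟩
    cases L with
    | nil => simp at hc
    | cons x L => exact List.countP_pos_iff.2 ⟨x, by simp, by simpa using hc⟩

lemma headD_conj (hL : IsPartitionList L) : (conj L).headD 0 = L.length := by
  rw [show (conj L).headD 0 = (conj L).getD 0 0 by cases conj L <;> rfl, getD_conj hL.1,
    List.countP_eq_length]
  simpa using hL.2

lemma conj_eq_length_cons_tail (hL : IsPartitionList L) (hne : L ≠ []) :
    conj L = L.length :: (conj L).tail := by
  have hpos : (conj L).length ≠ 0 := by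
    obtain ⟨y, L', rfl⟩ := List.exists_cons_of_ne_nil hne
    simpa [length_conj] using (hL.2 y List.mem_cons_self).ne'
  rw [← headD_conj hL]
  revert hpos
  cases conj L <;> simp

lemma conj_conj (hL : IsPartitionList L) : conj (conj L) = L := by
  have hlen : (conj (conj L)).length = L.length := by rw [length_conj, headD_conj hL]
  refine List.ext_getElem hlen fun i h₁ h₂ => ?_
  rw [← List.getD_eq_getElem _ 0 h₁, ← List.getD_eq_getElem _ 0 h₂]
  refine eq_of_forall_lt_iff fun c => ?_
  rw [lt_getD_conj_iff (isPartitionList_conj L).1, lt_getD_conj_iff hL.1]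

lemma le_length_of_mem_conj {x : ℕ} (hx : x ∈ conj L) : x ≤ L.length := by
  simp only [conj, List.mem_map] at hx
  obtain ⟨c, -, rfl⟩ := hx
  exact List.countP_le_length

lemma forall_le_iff_headD_le (hL : L.Pairwise (· ≥ ·)) {N : ℕ} :
    (∀ x ∈ L, x ≤ N) ↔ L.headD 0 ≤ N := by
  refine ⟨fun h => ?_, fun h x hx => (le_headD_of_mem hL hx).trans h⟩
  cases L with
  | nil => simp
  | cons x L => exact h x List.mem_cons_self

lemma sum_range_countP_lt {m : ℕ} (hm : ∀ x ∈ L, x ≤ m) :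
    ∑ c ∈ Finset.range m, L.countP (c < ·) = L.sum := by
  induction L with
  | nil => simp
  | cons x L ih =>
    simp only [List.countP_cons, decide_eq_true_eq, Finset.sum_add_distrib, List.sum_cons]
    rw [ih fun y hy => hm y (List.mem_cons_of_mem x hy), Finset.sum_boole, add_comm]
    congr
    have hx : x ≤ m := hm x List.mem_cons_self
    have hfilter : (Finset.range m).filter (· < x) = Finset.range x := by
      ext c
      simp only [Finset.mem_filter, Finset.mem_range]
      omega
    rw [hfilter, Finset.card_range]

lemma sum_conj (hL : L.Pairwise (· ≥ ·)) : (conj L).sum = L.sum :=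
  sum_range_countP_lt fun _ hx => le_headD_of_mem hL hx

lemma countP_conj (hL : L.Pairwise (· ≥ ·)) {m : ℕ} (hm : L.headD 0 ≤ m) (p : ℕ → Prop)
    [DecidablePred p] (hp : ¬ p 0) :
    (conj L).countP p = (List.range m).countP fun c => p (L.countP (c < ·)) := by
  obtain ⟨r, rfl⟩ := Nat.exists_eq_add_of_le hm
  rw [List.range_add, List.countP_append, conj, List.countP_map, Function.comp_def,
    left_eq_add, List.countP_eq_zero]
  simp only [List.mem_map, List.mem_range]
  rintro _ ⟨c, -, rfl⟩
  rw [countP_lt_eq_zero hL (Nat.le_add_right _ c)]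
  simpa using hp

lemma alternatingSum_eq_countP_odd_conj (hL : L.Pairwise (· ≥ ·)) :
    (L.map ((↑) : ℕ → ℤ)).alternatingSum = (conj L).countP (Odd ·) := by
  induction L with
  | nil => simp [conj]
  | cons x L ih =>
    rw [List.pairwise_cons] at hL
    have hhead : L.headD 0 ≤ x := (forall_le_iff_headD_le hL.2).1 hL.1
    rw [List.map_cons, List.alternatingSum_cons, ih hL.2,
      countP_conj hL.2 hhead (Odd ·) (by decide), conj, List.countP_map, Function.comp_def]
    -- the new largest part `x` adds a cell to each of the first `x` columns
    have hodd : (List.range x).countP (fun c => Odd ((x :: L).countP (c < ·))) =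
        (List.range x).countP (fun c => ¬ Odd (L.countP (c < ·))) := by
      refine List.countP_congr fun c hc => ?_
      rw [List.mem_range] at hc
      simp [hc, Nat.odd_add_one]
    have hsplit := List.length_eq_countP_add_countP
      (fun c => decide (Odd (L.countP (c < ·)))) (l := List.range x)
    simp only [List.headD_cons, hodd, List.length_range, decide_eq_true_eq] at hsplit ⊢
    omega

def splitParity (C : List ℕ) : List ℕ × List ℕ :=
  ((C.filter (Odd ·)).map fun x => (x + 1) / 2, (C.filter (Even ·)).map (· / 2))

-- `2 * x - 1` truncates at `x = 0`; parts of partitions are positive.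
def mergeParity (p : List ℕ × List ℕ) : List ℕ :=
  Multiset.sort ((p.1.map (2 * · - 1) ++ p.2.map (2 * ·) : List ℕ) : Multiset ℕ) (· ≥ ·)

lemma splitParity_cons_of_odd {x : ℕ} (hx : Odd x) :
    splitParity (x :: C) = ((x + 1) / 2 :: (splitParity C).1, (splitParity C).2) := by
  simp [splitParity, hx, Nat.not_even_iff_odd.2 hx]

lemma splitParity_cons_of_even {x : ℕ} (hx : Even x) :
    splitParity (x :: C) = ((splitParity C).1, x / 2 :: (splitParity C).2) := by
  simp [splitParity, hx, Nat.not_odd_iff_even.2 hx]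

lemma length_splitParity_fst : (splitParity C).1.length = C.countP (Odd ·) := by
  simp [splitParity, List.countP_eq_length_filter]

lemma length_splitParity :
    (splitParity C).1.length + (splitParity C).2.length = C.length := by
  induction C with
  | nil => rfl
  | cons x C ih =>
    rcases Nat.even_or_odd x with hx | hx
    · simp only [splitParity_cons_of_even hx, List.length_cons]; omega
    · simp only [splitParity_cons_of_odd hx, List.length_cons]; omega

lemma sum_splitParity :
    2 * ((splitParity C).1.sum + (splitParity C).2.sum) = C.sum + C.countP (Odd ·) := by
  induction C with
  | nil => rfl
  | cons x C ih =>
    rcases Nat.even_or_odd x with hx | hx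
    · simp only [splitParity_cons_of_even hx, List.sum_cons, List.countP_cons,
        Nat.not_odd_iff_even.2 hx, decide_false, Bool.false_eq_true, if_false]
      obtain ⟨m, rfl⟩ := hx
      omega
    · simp only [splitParity_cons_of_odd hx, List.sum_cons, List.countP_cons, hx, decide_true,
        if_true]
      obtain ⟨m, rfl⟩ := hx
      omega

lemma isPartitionList_splitParity (hC : IsPartitionList C) :
    IsPartitionList (splitParity C).1 ∧ IsPartitionList (splitParity C).2 := by
  simp only [IsPartitionList, splitParity, List.pairwise_map, List.mem_map, List.mem_filter,
    decide_eq_true_eq]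
  refine ⟨⟨(hC.1.filter _).imp fun h => Nat.div_le_div_right (by omega), ?_⟩,
    ⟨(hC.1.filter _).imp fun h => Nat.div_le_div_right h, ?_⟩⟩
  · rintro _ ⟨x, ⟨-, ⟨m, rfl⟩⟩, rfl⟩
    omega
  · rintro _ ⟨x, ⟨hx, ⟨m, rfl⟩⟩, rfl⟩
    have := hC.2 _ hx
    omega

lemma mergeParity_splitParity (hC : IsPartitionList C) : mergeParity (splitParity C) = C := by
  rw [mergeParity]
  refine List.Perm.eq_of_pairwise' (Multiset.pairwise_sort _ _) hC.1
    (Multiset.coe_eq_coe.1 ?_)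
  rw [Multiset.sort_eq, Multiset.coe_eq_coe, splitParity, List.map_map, List.map_map]
  refine List.Perm.trans ?_ (List.filter_append_perm (Odd ·) C)
  refine List.Perm.append (List.Perm.of_eq ?_) (List.Perm.of_eq ?_)
  · refine (List.map_congr_left fun x hx => ?_).trans (List.map_id _)
    obtain ⟨m, rfl⟩ := (by simpa using (List.mem_filter.1 hx).2 : Odd x)
    simp only [Function.comp_apply, id]
    omega
  · simp only [← decide_not, Nat.not_odd_iff_even]
    refine (List.map_congr_left fun x hx => ?_).trans (List.map_id _)
    obtain ⟨m, rfl⟩ := (by simpa using (List.mem_filter.1 hx).2 : Even x)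
    simp only [Function.comp_apply, id]
    omega

lemma pairwise_mergeParity (p : List ℕ × List ℕ) : (mergeParity p).Pairwise (· ≥ ·) :=
  Multiset.pairwise_sort _ _

lemma mergeParity_perm (p : List ℕ × List ℕ) :
    (mergeParity p).Perm (p.1.map (2 * · - 1) ++ p.2.map (2 * ·)) :=
  Multiset.coe_eq_coe.1 (Multiset.sort_eq _ _)

lemma filter_eq_of_perm_append {M l₁ l₂ : List ℕ} (hM : M.Pairwise (· ≥ ·))
    (hl₁ : l₁.Pairwise (· ≥ ·)) (hperm : M.Perm (l₁ ++ l₂)) {p : ℕ → Prop} [DecidablePred p]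
    (hp₁ : ∀ x ∈ l₁, p x) (hp₂ : ∀ x ∈ l₂, ¬ p x) : M.filter (p ·) = l₁ := by
  refine List.Perm.eq_of_pairwise' (hM.filter _) hl₁ ((hperm.filter _).trans (.of_eq ?_))
  rw [List.filter_append, List.filter_eq_self.2 fun x hx => decide_eq_true (hp₁ x hx),
    List.filter_eq_nil_iff.2 fun x hx => by simpa using hp₂ x hx, List.append_nil]

lemma splitParity_mergeParity {p : List ℕ × List ℕ} (h₁ : IsPartitionList p.1)
    (h₂ : IsPartitionList p.2) : splitParity (mergeParity p) = p := by
  have hodd : ∀ x ∈ p.1.map (2 * · - 1), Odd x := by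
    simp only [List.mem_map]
    rintro _ ⟨x, hx, rfl⟩
    have := h₁.2 x hx
    exact ⟨x - 1, by omega⟩
  have heven : ∀ x ∈ p.2.map (2 * ·), Even x := by
    simp only [List.mem_map]
    rintro _ ⟨x, -, rfl⟩
    exact even_two_mul x
  have hfO := filter_eq_of_perm_append (pairwise_mergeParity p)
    (List.pairwise_map.2 (h₁.1.imp fun h => by omega)) (mergeParity_perm p) hodd
    fun x hx => Nat.not_odd_iff_even.2 (heven x hx)
  have hfE := filter_eq_of_perm_append (pairwise_mergeParity p)
    (List.pairwise_map.2 (h₂.1.imp fun h => by omega))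
    ((mergeParity_perm p).trans List.perm_append_comm) heven
    fun x hx => Nat.not_even_iff_odd.2 (hodd x hx)
  rw [splitParity, hfO, hfE, List.map_map, List.map_map]
  refine Prod.ext ((List.map_congr_left fun x hx => ?_).trans (List.map_id _))
    ((List.map_congr_left fun x _ => ?_).trans (List.map_id _))
  · have := h₁.2 x hx
    simp only [Function.comp_apply, id]
    omega
  · simp

lemma isPartitionList_mergeParity {p : List ℕ × List ℕ} (h₁ : IsPartitionList p.1)
    (h₂ : IsPartitionList p.2) : IsPartitionList (mergeParity p) := by
  refine ⟨pairwise_mergeParity p, fun x hx => ?_⟩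
  simp only [(mergeParity_perm p).mem_iff, List.mem_append, List.mem_map] at hx
  rcases hx with ⟨y, hy, rfl⟩ | ⟨y, hy, rfl⟩
  · have := h₁.2 y hy
    omega
  · have := h₂.2 y hy
    omega

lemma isPartitionList_tail (hL : IsPartitionList L) : IsPartitionList L.tail :=
  ⟨hL.1.sublist (List.tail_sublist _), fun x hx => hL.2 x (List.mem_of_mem_tail hx)⟩

lemma isPartitionList_cons {m : ℕ} (hL : IsPartitionList L) (hm : 0 < m)
    (hle : ∀ x ∈ L, x ≤ m) : IsPartitionList (m :: L) :=
  ⟨List.pairwise_cons.2 ⟨hle, hL.1⟩, List.forall_mem_cons.2 ⟨hm, hL.2⟩⟩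

end PartitionList

namespace ABSeq

open PartitionList

variable {a b k n : ℕ} {d : List ℕ}

def initSeg (a b : ℕ) : List ℕ := (List.range b).map (a + · + 1)

lemma length_initSeg (a b : ℕ) : (initSeg a b).length = b := by simp [initSeg]

lemma altSum_eq_sum_range (d : List ℕ) (m : ℕ) :
    altSum d m = ∑ i ∈ Finset.range m, (-1 : ℤ) ^ (i + 1) * d.getD i 0 := by
  induction m with
  | zero => simp [altSum]
  | succ m ih =>
    rw [altSum, Finset.sum_Icc_succ_top (by omega), ← altSum, ih, Finset.sum_range_succ]
    simp [entry]

lemma altSum_length (d : List ℕ) :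
    altSum d d.length = -(d.map ((↑) : ℕ → ℤ)).alternatingSum := by
  rw [altSum_eq_sum_range]
  induction d with
  | nil => simp
  | cons x d ih =>
    rw [List.length_cons, Finset.sum_range_succ', List.map_cons, List.alternatingSum_cons]
    simp only [List.getD_cons_succ, List.getD_cons_zero]
    have hshift : ∑ i ∈ Finset.range d.length, (-1 : ℤ) ^ (i + 1 + 1) * d.getD i 0 =
        -∑ i ∈ Finset.range d.length, (-1 : ℤ) ^ (i + 1) * d.getD i 0 := by
      rw [← Finset.sum_neg_distrib]
      exact Finset.sum_congr rfl fun i _ => by ring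
    rw [hshift, ih]
    ring

lemma entry_succ {j : ℕ} (hj : j < d.length) : entry d (j + 1) = d[j] :=
  List.getD_eq_getElem _ _ hj

lemma forall_one_le_entry_iff :
    (∀ i, 1 ≤ i → i ≤ d.length → 1 ≤ entry d i) ↔ ∀ x ∈ d, 0 < x := by
  constructor
  · intro h x hx
    obtain ⟨j, hj, rfl⟩ := List.getElem_of_mem hx
    have := h (j + 1) (by omega) (by omega)
    rwa [entry_succ hj] at this
  · intro h i h₁ h₂
    obtain ⟨j, rfl⟩ := Nat.exists_eq_add_of_le' h₁
    rw [entry_succ (by omega)]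
    exact h _ (List.getElem_mem _)

lemma forall_entry_eq_iff (hb : b ≤ d.length) :
    (∀ i, 1 ≤ i → i ≤ b → entry d i = a + i) ↔ d.take b = initSeg a b := by
  constructor
  · intro h
    refine List.ext_getElem (by simp [length_initSeg]; omega) fun j h₁ h₂ => ?_
    rw [length_initSeg] at h₂
    have := h (j + 1) (by omega) (by omega)
    rw [entry_succ (by omega)] at this
    simp [initSeg, this]
    omega
  · intro h i h₁ h₂
    obtain ⟨j, rfl⟩ := Nat.exists_eq_add_of_le' h₁
    have := List.getElem_of_eq h (i := j) (by simp; omega)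
    rw [entry_succ (by omega)]
    simp [initSeg] at this
    omega

lemma entry_antitone_iff (hb : 1 ≤ b) :
    (∀ i j, b ≤ i → i ≤ j → j ≤ d.length → entry d j ≤ entry d i) ↔
      (d.drop (b - 1)).Pairwise (· ≥ ·) := by
  rw [List.pairwise_iff_getElem]
  simp only [List.length_drop, List.getElem_drop]
  obtain ⟨c, rfl⟩ := Nat.exists_eq_add_of_le' hb
  simp only [Nat.add_sub_cancel]
  constructor
  · intro h s t hs ht hst
    have := h (c + s + 1) (c + t + 1) (by omega) (by omega) (by omega)
    rwa [entry_succ (by omega), entry_succ (by omega)] at this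
  · intro h i j hi hij hj
    rcases hij.eq_or_lt with rfl | hij
    · exact le_rfl
    obtain ⟨s, rfl⟩ := Nat.exists_eq_add_of_le hi
    obtain ⟨t, rfl⟩ := Nat.exists_eq_add_of_le hij.le
    have := h s (s + t) (by omega) (by omega) (by omega)
    rw [show c + 1 + s + t = c + (s + t) + 1 by ring, show c + 1 + s = c + s + 1 by ring,
      entry_succ (by omega), entry_succ (by omega)]
    exact this

lemma isABSeq_iff :
    IsABSeq a b d ↔ 1 ≤ b ∧ b ≤ d.length ∧ (∀ x ∈ d, 0 < x) ∧ d.take b = initSeg a b ∧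
      (d.drop (b - 1)).Pairwise (· ≥ ·) ∧ (d.map ((↑) : ℕ → ℤ)).alternatingSum = 0 := by
  rw [IsABSeq, forall_one_le_entry_iff, altSum_length, neg_eq_zero]
  constructor
  · rintro ⟨hb, hlen, hpos, hinit, hanti, halt⟩
    exact ⟨hb, hlen, hpos, (forall_entry_eq_iff hlen).1 hinit, (entry_antitone_iff hb).1 hanti,
      halt⟩
  · rintro ⟨hb, hlen, hpos, hinit, hanti, halt⟩
    exact ⟨hb, hlen, hpos, (forall_entry_eq_iff hlen).2 hinit, (entry_antitone_iff hb).2 hanti,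
      halt⟩

lemma initSeg_add (a b c : ℕ) : initSeg a (b + c) = initSeg a b ++ initSeg (a + b) c := by
  simp only [initSeg, List.range_add, List.map_append, List.map_map]
  congr 2
  ext x
  simp only [Function.comp_apply]
  ring

lemma initSeg_two (a : ℕ) : initSeg a 2 = [a + 1, a + 2] := rfl

lemma initSeg_append_drop (h : IsABSeq a b d) : initSeg a b ++ d.drop b = d := by
  rw [← (isABSeq_iff.1 h).2.2.2.1, List.take_append_drop]

lemma sum_initSeg_two_mul (a k : ℕ) : (initSeg a (2 * k)).sum = k * (2 * a + 2 * k + 1) := by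
  induction k with
  | zero => simp [initSeg]
  | succ k ih =>
    rw [mul_add, initSeg_add, List.sum_append, ih, initSeg_two]
    simp only [List.sum_cons, List.sum_nil]
    ring

lemma alternatingSum_initSeg_two_mul (a k : ℕ) :
    ((initSeg a (2 * k)).map ((↑) : ℕ → ℤ)).alternatingSum = -k := by
  induction k with
  | zero => simp [initSeg]
  | succ k ih =>
    rw [mul_add, initSeg_add, List.map_append, List.alternatingSum_append, ih, List.length_map,
      length_initSeg, pow_mul, initSeg_two]
    simp only [List.map_cons, List.map_nil, List.alternatingSum_cons, List.alternatingSum_nil]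
    push_cast
    ring

lemma isABSeq_initSeg_append_iff {k : ℕ} {E : List ℕ} (hk : 1 ≤ k) :
    IsABSeq a (2 * k) (initSeg a (2 * k) ++ E) ↔
      IsPartitionList E ∧ (∀ x ∈ E, x ≤ a + 2 * k) ∧
        (E.map ((↑) : ℕ → ℤ)).alternatingSum = k := by
  have hdrop : (initSeg a (2 * k) ++ E).drop (2 * k - 1) = (a + 2 * k) :: E := by
    rw [show 2 * k = 2 * k - 1 + 1 by omega, initSeg_add, List.append_assoc, Nat.add_sub_cancel,
      List.drop_left' (length_initSeg _ _)]
    simp [initSeg]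
    omega
  rw [isABSeq_iff, hdrop, List.take_left' (length_initSeg _ _), List.pairwise_cons,
    List.map_append, List.alternatingSum_append, alternatingSum_initSeg_two_mul, List.length_map,
    length_initSeg, pow_mul, List.forall_mem_append, IsPartitionList]
  simp only [List.length_append, length_initSeg, neg_one_sq, one_pow, one_smul]
  have hinit : ∀ x ∈ initSeg a (2 * k), 0 < x := by
    simp [initSeg]
  constructor
  · rintro ⟨-, -, ⟨-, hpos⟩, -, ⟨hle, hsort⟩, halt⟩
    exact ⟨⟨hsort, hpos⟩, hle, by linarith⟩
  · rintro ⟨⟨hsort, hpos⟩, hle, halt⟩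
    exact ⟨by omega, by omega, ⟨hinit, hpos⟩, trivial, ⟨hle, hsort⟩, by linarith⟩

def tailSet (a k n : ℕ) : Set (List ℕ) :=
  {E | IsPartitionList E ∧ (∀ x ∈ E, x ≤ a + 2 * k) ∧
    (E.map ((↑) : ℕ → ℤ)).alternatingSum = k ∧ E.sum + k * (2 * a + 2 * k + 1) = 2 * n}

def columnSet (a k n : ℕ) : Set (List ℕ) :=
  {C | IsPartitionList C ∧ C.length ≤ a + 2 * k ∧ C.countP (Odd ·) = k ∧
    C.sum + k * (2 * a + 2 * k + 1) = 2 * n}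

def halvesSet (a k n : ℕ) : Set (List ℕ × List ℕ) :=
  {p | IsPartitionList p.1 ∧ IsPartitionList p.2 ∧ p.1.length = k ∧ p.2.length ≤ a + k ∧
    p.1.sum + p.2.sum + k * (a + k) = n}

lemma bijOn_initSeg_append_tailSet (hk : 1 ≤ k) :
    Set.BijOn (initSeg a (2 * k) ++ ·) (tailSet a k n)
      {d | IsABSeq a (2 * k) d ∧ d.sum = 2 * n} := by
  refine Set.InvOn.bijOn (f' := (·.drop (2 * k)))
    ⟨fun E _ => List.drop_left' (length_initSeg _ _), fun d hd => initSeg_append_drop hd.1⟩ ?_ ?_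
  · rintro E ⟨hE, hle, halt, hsum⟩
    refine ⟨(isABSeq_initSeg_append_iff hk).2 ⟨hE, hle, halt⟩, ?_⟩
    rw [List.sum_append, sum_initSeg_two_mul]
    omega
  · rintro d ⟨hd, hsum⟩
    have hsplit := initSeg_append_drop hd
    rw [← hsplit] at hd hsum
    obtain ⟨hE, hle, halt⟩ := (isABSeq_initSeg_append_iff hk).1 hd
    rw [List.sum_append, sum_initSeg_two_mul] at hsum
    refine ⟨hE, hle, halt, ?_⟩
    dsimp only
    omega

lemma bijOn_conj_tailSet : Set.BijOn conj (tailSet a k n) (columnSet a k n) := by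
  refine Set.InvOn.bijOn ⟨fun E hE => conj_conj hE.1, fun C hC => conj_conj hC.1⟩ ?_ ?_
  · rintro E ⟨hE, hle, halt, hsum⟩
    refine ⟨isPartitionList_conj E, ?_, ?_, by rwa [sum_conj hE.1]⟩
    · rw [length_conj]
      exact (forall_le_iff_headD_le hE.1).1 hle
    · have := alternatingSum_eq_countP_odd_conj hE.1
      rw [halt] at this
      exact_mod_cast this.symm
  · rintro C ⟨hC, hlen, hodd, hsum⟩
    refine ⟨isPartitionList_conj C, fun x hx => (le_length_of_mem_conj hx).trans hlen, ?_,
      by rwa [sum_conj hC.1]⟩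
    rw [alternatingSum_eq_countP_odd_conj (isPartitionList_conj C).1, conj_conj hC, hodd]

lemma bijOn_splitParity_columnSet :
    Set.BijOn splitParity (columnSet a k n) (halvesSet a k n) := by
  refine Set.InvOn.bijOn (f' := mergeParity)
    ⟨fun C hC => mergeParity_splitParity hC.1, fun p hp => splitParity_mergeParity hp.1 hp.2.1⟩
    ?_ ?_
  · rintro C ⟨hC, hlen, hodd, hsum⟩
    have h₁ := length_splitParity_fst (C := C)
    have h₂ := length_splitParity (C := C)
    have h₃ := sum_splitParity (C := C)
    exact ⟨(isPartitionList_splitParity hC).1, (isPartitionList_splitParity hC).2, by omega,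
      by omega, by linarith⟩
  · rintro p ⟨hp₁, hp₂, hlen₁, hlen₂, hsum⟩
    have h₁ := length_splitParity_fst (C := mergeParity p)
    have h₂ := length_splitParity (C := mergeParity p)
    have h₃ := sum_splitParity (C := mergeParity p)
    rw [splitParity_mergeParity hp₁ hp₂] at h₁ h₂ h₃
    exact ⟨isPartitionList_mergeParity hp₁ hp₂, by omega, by omega, by linarith⟩

lemma bijOn_conj_halvesSet (hk : 1 ≤ k) :
    Set.BijOn (fun p => ((conj p.1).tail, conj p.2)) (halvesSet a k n)
      {p : List ℕ × List ℕ | IsPartitionList p.1 ∧ IsPartitionList p.2 ∧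
        (∀ x ∈ p.1, x ≤ k) ∧ (∀ x ∈ p.2, x ≤ a + k) ∧
        p.1.sum + p.2.sum + k * (a + k) + k = n} := by
  have hcons : ∀ {L : List ℕ}, IsPartitionList L → L.length = k → k :: (conj L).tail = conj L :=
    fun hL hlen => by
      rw [conj_eq_length_cons_tail hL (by rintro rfl; simp at hlen; omega), hlen]
      rfl
  refine Set.InvOn.bijOn (f' := fun q => (conj (k :: q.1), conj q.2)) ⟨?_, ?_⟩ ?_ ?_
  · rintro p ⟨hp₁, hp₂, hlen₁, -⟩
    simp only [hcons hp₁ hlen₁, conj_conj hp₁, conj_conj hp₂]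
  · rintro q ⟨hq₁, hq₂, hle₁, -⟩
    simp only [conj_conj (isPartitionList_cons hq₁ hk hle₁), conj_conj hq₂, List.tail_cons]
  · rintro p ⟨hp₁, hp₂, hlen₁, hlen₂, hsum⟩
    have hsum₁ := congrArg List.sum (hcons hp₁ hlen₁)
    rw [List.sum_cons, sum_conj hp₁.1] at hsum₁
    refine ⟨isPartitionList_tail (isPartitionList_conj _), isPartitionList_conj _,
      fun x hx => hlen₁ ▸ le_length_of_mem_conj (List.mem_of_mem_tail hx),
      fun x hx => (le_length_of_mem_conj hx).trans hlen₂, ?_⟩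
    dsimp only
    rw [sum_conj hp₂.1]
    omega
  · rintro q ⟨hq₁, hq₂, hle₁, hle₂, hsum⟩
    have hq₁' := isPartitionList_cons hq₁ hk hle₁
    refine ⟨isPartitionList_conj _, isPartitionList_conj _, by simp [length_conj], ?_, ?_⟩
    · rw [length_conj]
      exact (forall_le_iff_headD_le hq₂.1).1 hle₂
    · rw [sum_conj hq₁'.1, sum_conj hq₂.1, List.sum_cons]
      omega

end ABSeq

/-- Even-`b` coefficient extraction of Theorem 2.1: the number of `(a, 2k)`-sequences `Δ`
with `|Δ| = 2n` equals the number of pairs `(μ, ν)` of partitions with parts of `μ` at most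
`k`, parts of `ν` at most `a + k`, and `|μ| + |ν| + k(a + k) + k = n`. -/
theorem abseq_even_count (a k n : ℕ) (hk : 1 ≤ k) :
    Set.ncard {d : List ℕ | IsABSeq a (2 * k) d ∧ d.sum = 2 * n} =
    Set.ncard {p : List ℕ × List ℕ | IsPartitionList p.1 ∧ IsPartitionList p.2 ∧
      (∀ x ∈ p.1, x ≤ k) ∧ (∀ x ∈ p.2, x ≤ a + k) ∧
      p.1.sum + p.2.sum + k * (a + k) + k = n} := by
  calc _ = (ABSeq.tailSet a k n).ncard := (ABSeq.bijOn_initSeg_append_tailSet hk).ncard_eq.symm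
    _ = (ABSeq.columnSet a k n).ncard := ABSeq.bijOn_conj_tailSet.ncard_eq
    _ = (ABSeq.halvesSet a k n).ncard := ABSeq.bijOn_splitParity_columnSet.ncard_eq
    _ = _ := (ABSeq.bijOn_conj_halvesSet hk).ncard_eq
end

section
/- Let λ = (λ_1 > λ_2 > ⋯ > λ_m > 0) be a strict partition with m parts and column sequence c_1, c_2, …, c_{λ_1}. Then there exists an integer k with 0 ≤ k ≤ m such that ∑_{i=1}^{k} (−1)^i c_i = ∑_{i=1}^{λ_1} (−1)^i c_i. -/
/-!
Because `λ` is strict, `λ_i ≥ m - i + 1`, so every row of the shifted diagram reaches column `m`.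
Hence `c_j = j` for `j ≤ m`, while from column `m` on the sequence `c_j` is weakly decreasing and
bounded by `m`. The alternating sum over the columns beyond `m` therefore has sign `(-1)^(m+1)`
and absolute value at most `c_(m+1) ≤ m`, which places the total sum in the range
`[-(m+1)/2, m/2]`. That range is exactly the set of partial sums `∑_{i ≤ k} (-1)^i i` with `k ≤ m`,
and these coincide with `∑_{i ≤ k} (-1)^i c_i`.
-/

open Finset

def altSumId (k : ℕ) : ℤ := ∑ i ∈ Icc 1 k, (-1 : ℤ) ^ i * i

theorem altSumId_succ (k : ℕ) : altSumId (k + 1) = altSumId k + (-1) ^ (k + 1) * (k + 1 : ℕ) :=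
  sum_Icc_succ_top (by omega) _

theorem altSumId_two_mul (t : ℕ) : altSumId (2 * t) = t := by
  induction t with
  | zero => rfl
  | succ t ih =>
    rw [show 2 * (t + 1) = 2 * t + 1 + 1 by ring, altSumId_succ, altSumId_succ, ih,
      (odd_two_mul_add_one t).neg_one_pow, pow_succ, (odd_two_mul_add_one t).neg_one_pow]
    push_cast; ring

theorem altSumId_two_mul_add_one (t : ℕ) : altSumId (2 * t + 1) = -(t + 1) := by
  rw [altSumId_succ, altSumId_two_mul, (odd_two_mul_add_one t).neg_one_pow]
  push_cast; ring

theorem exists_altSumId_eq {m : ℕ} {S : ℤ} (h₁ : -(m + 1 : ℤ) ≤ 2 * S) (h₂ : 2 * S ≤ m) :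
    ∃ k ≤ m, altSumId k = S := by
  obtain hS | hS := le_or_gt 0 S
  · exact ⟨2 * S.toNat, by omega, by rw [altSumId_two_mul]; omega⟩
  · exact ⟨2 * ((-S).toNat - 1) + 1, by omega, by rw [altSumId_two_mul_add_one]; omega⟩

theorem exists_altSumId_eq_add {m : ℕ} {A : ℤ} (h₀ : 0 ≤ A) (hA : A ≤ m) :
    ∃ k ≤ m, altSumId k = altSumId m + (-1) ^ (m + 1) * A := by
  obtain ⟨t, rfl | rfl⟩ := Nat.even_or_odd' m
  · rw [altSumId_two_mul, (odd_two_mul_add_one t).neg_one_pow]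
    push_cast at hA
    refine exists_altSumId_eq ?_ ?_ <;> push_cast <;> linarith
  · rw [altSumId_two_mul_add_one, show 2 * t + 1 + 1 = 2 * (t + 1) by ring,
      (even_two_mul _).neg_one_pow]
    push_cast at hA
    refine exists_altSumId_eq ?_ ?_ <;> push_cast <;> linarith

theorem Antitone.alternating_sum_range_mem_Icc {R : Type*} [Ring R] [LinearOrder R]
    [IsOrderedRing R] {f : ℕ → R} (hf : Antitone f) (hf₀ : 0 ≤ f) (n : ℕ) :
    ∑ i ∈ range n, (-1) ^ i * f i ∈ Set.Icc 0 (f 0) := by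
  induction n generalizing f with
  | zero => simpa using hf₀ 0
  | succ n ih =>
    obtain ⟨h₁, h₂⟩ :=
      ih (f := fun i => f (i + 1)) (fun _ _ h => hf (by omega)) fun i => hf₀ (i + 1)
    rw [sum_range_succ']
    simp only [pow_succ, mul_neg_one, neg_mul, sum_neg_distrib, pow_zero, one_mul]
    exact ⟨le_neg_add_iff_le.mpr (h₂.trans (hf zero_le_one)),
      add_le_of_nonpos_left (neg_nonpos.mpr h₁)⟩

theorem entry_cons_one (a : ℕ) (l : List ℕ) : entry (a :: l) 1 = a := rfl

theorem entry_cons_succ (a : ℕ) (l : List ℕ) {i : ℕ} (hi : 1 ≤ i) :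
    entry (a :: l) (i + 1) = entry l i := by
  obtain ⟨i, rfl⟩ := Nat.exists_eq_add_of_le' hi
  rfl

theorem IsStrictPartition.of_cons {a : ℕ} {l : List ℕ} (h : IsStrictPartition (a :: l)) :
    IsStrictPartition l :=
  ⟨(List.pairwise_cons.mp h.1).2, fun x hx => h.2 x (List.mem_cons_of_mem a hx)⟩

theorem IsStrictPartition.length_lt_entry_add {L : List ℕ} (hL : IsStrictPartition L) {i : ℕ}
    (hi₁ : 1 ≤ i) (hi₂ : i ≤ L.length) : L.length < entry L i + i := by
  induction L generalizing i with
  | nil => simp only [List.length_nil] at hi₂; omega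
  | cons a l ih =>
    obtain rfl | hi := eq_or_lt_of_le hi₁
    · rw [entry_cons_one]
      match l, ih with
      | [], _ => simpa using hL.2 a
      | b :: l', ih =>
        have hba : b < a := (List.pairwise_cons.mp hL.1).1 b (by simp)
        have := ih hL.of_cons le_rfl (by simp)
        rw [entry_cons_one] at this
        simp only [List.length_cons] at this ⊢
        omega
    · obtain ⟨i, rfl⟩ : ∃ j, i = j + 1 := ⟨i - 1, by omega⟩
      rw [entry_cons_succ a l (by omega)]
      have := ih hL.of_cons (i := i) (by omega) (by simpa using hi₂)
      simp only [List.length_cons]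
      omega

theorem sum_Icc_neg_one_pow_mul_eq_add {R : Type*} [Ring R] (c : ℕ → R) {m n : ℕ} (h : m ≤ n) :
    ∑ i ∈ Icc 1 n, (-1) ^ i * c i = ∑ i ∈ Icc 1 m, (-1) ^ i * c i +
      (-1) ^ (m + 1) * ∑ i ∈ range (n - m), (-1) ^ i * c (m + 1 + i) := by
  rw [← Ico_add_one_right_eq_Icc, ← Ico_add_one_right_eq_Icc,
    ← sum_Ico_consecutive _ (by omega : 1 ≤ m + 1) (by omega : m + 1 ≤ n + 1),
    sum_Ico_eq_sum_range _ (m + 1), mul_sum, show n + 1 - (m + 1) = n - m by omega]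
  simp only [pow_add, mul_assoc]

theorem colSeq_eq_self {L : List ℕ} (hL : IsStrictPartition L) {j : ℕ} (hj : j ≤ L.length) :
    colSeq L j = j := by
  have : (Icc 1 L.length).filter (fun i => i ≤ j ∧ j ≤ entry L i + i - 1) = Icc 1 j := by
    ext i
    simp only [mem_filter, mem_Icc]
    constructor
    · rintro ⟨⟨hi₁, -⟩, hij, -⟩
      exact ⟨hi₁, hij⟩
    · rintro ⟨hi₁, hij⟩
      have := hL.length_lt_entry_add hi₁ (hij.trans hj)
      exact ⟨⟨hi₁, hij.trans hj⟩, hij, by omega⟩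
  rw [colSeq, this, Nat.card_Icc, Nat.add_sub_cancel]

theorem colSeq_le_length (L : List ℕ) (j : ℕ) : colSeq L j ≤ L.length :=
  (card_filter_le _ _).trans (by simp)

theorem colSeq_antitoneOn (L : List ℕ) : AntitoneOn (colSeq L) (Set.Ici L.length) := by
  intro i hi j _ hij
  refine card_le_card fun x hx => ?_
  simp only [mem_filter, mem_Icc, Set.mem_Ici] at hx hi ⊢
  omega

theorem sum_Icc_colSeq_eq_altSumId {L : List ℕ} (hL : IsStrictPartition L) {k : ℕ}
    (hk : k ≤ L.length) : ∑ i ∈ Icc 1 k, (-1 : ℤ) ^ i * (colSeq L i : ℤ) = altSumId k :=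
  sum_congr rfl fun i hi => by rw [colSeq_eq_self hL ((mem_Icc.mp hi).2.trans hk)]

theorem IsStrictPartition.length_le_entry_one {L : List ℕ} (hL : IsStrictPartition L) :
    L.length ≤ entry L 1 := by
  rcases Nat.eq_zero_or_pos L.length with h | h
  · omega
  · have := hL.length_lt_entry_add le_rfl h
    omega

/-- The claim in Lemma 3.1: for a strict partition `λ` with `m` parts and column sequence
`c_1, …, c_{λ_1}`, there is `0 ≤ k ≤ m` with
`∑_{i=1}^{k} (−1)^i c_i = ∑_{i=1}^{λ_1} (−1)^i c_i`. -/
theorem exists_initial_altSum_eq (L : List ℕ) (hL : IsStrictPartition L) :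
    ∃ k : ℕ, k ≤ L.length ∧
      ∑ i ∈ Finset.Icc 1 k, (-1 : ℤ) ^ i * (colSeq L i : ℤ) =
      ∑ i ∈ Finset.Icc 1 (entry L 1), (-1 : ℤ) ^ i * (colSeq L i : ℤ) := by
  set m := L.length
  have htail_anti : Antitone fun i => (colSeq L (m + 1 + i) : ℤ) := fun i j hij =>
    Nat.cast_le.mpr <| colSeq_antitoneOn L (Set.mem_Ici.mpr (by omega))
      (Set.mem_Ici.mpr (by omega)) (by omega)
  obtain ⟨hA₀, hA⟩ := htail_anti.alternating_sum_range_mem_Icc (fun i => by positivity)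
    (entry L 1 - m)
  obtain ⟨k, hk, hkS⟩ := exists_altSumId_eq_add hA₀
    (hA.trans (by exact_mod_cast colSeq_le_length L (m + 1 + 0)))
  refine ⟨k, hk, ?_⟩
  rw [sum_Icc_neg_one_pow_mul_eq_add _ hL.length_le_entry_one, sum_Icc_colSeq_eq_altSumId hL hk,
    sum_Icc_colSeq_eq_altSumId hL le_rfl, hkS]
end

section
/- Let λ = (λ_1 > λ_2 > ⋯ > λ_m > 0) be a strict partition with column sequence c_1, c_2, …, c_{λ_1}. Then the BG-rank of λ satisfies r(λ) = ∑_{j=1}^{λ_1} (−1)^{j+1} c_j, i.e., the BG-rank equals the negative of the alternating sum ∑_{j=1}^{λ_1} (−1)^j c_j. -/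
/-!
Write `c_j = ∑_i [i ≤ j < i + λ_i]`, so that the alternating column sum becomes a sum over rows
of alternating sums over the cells of each row. Row `i` occupies the columns `i, …, i + λ_i - 1`,
and the alternating sum over `λ_i` consecutive columns starting at column `i` cancels in pairs,
leaving `(-1)^(i+1)` when `λ_i` is odd and `0` when it is even: exactly the contribution of row
`i` to the BG-rank. Strictness guarantees that every row lies within the first `λ_1` columns.
-/

lemma Finset.sum_Ico_add_neg_one_pow_succ {R : Type*} [Ring R] (a k : ℕ) :
    ∑ j ∈ Finset.Ico a (a + k), (-1 : R) ^ (j + 1) = if Odd k then (-1) ^ (a + 1) else 0 := by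
  rw [Finset.sum_Ico_eq_sum_range, Nat.add_sub_cancel_left]
  have h : ∀ r, (-1 : R) ^ (a + r + 1) = (-1) ^ (a + 1) * (-1) ^ r := fun r => by
    rw [← pow_add, add_right_comm]
  simp only [h, ← Finset.mul_sum, Finset.sum_range, Fin.sum_neg_one_pow, ← Nat.not_odd_iff_even]
  split_ifs <;> simp

lemma List.Pairwise.getElem_add_le_getElem_zero {L : List ℕ} (hL : L.Pairwise (· > ·))
    (i : ℕ) (hi : i < L.length) : L[i] + i ≤ L[0] := by
  induction i with
  | zero => simp
  | succ i ih =>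
    have hlt : L[i + 1] < L[i] := List.pairwise_iff_getElem.mp hL i (i + 1) _ hi (by omega)
    have := ih (by omega)
    omega

lemma entry_succ (L : List ℕ) (i : ℕ) (hi : i < L.length) : entry L (i + 1) = L[i] := by
  simp [entry, List.getD_eq_getElem?_getD, List.getElem?_eq_getElem hi]

lemma IsStrictPartition.entry_add_le {L : List ℕ} (hL : IsStrictPartition L) (i : ℕ)
    (hi₁ : 1 ≤ i) (hi₂ : i ≤ L.length) : entry L i + i ≤ entry L 1 + 1 := by
  obtain ⟨k, rfl⟩ := Nat.exists_eq_add_of_le' hi₁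
  rw [entry_succ L k (by omega), entry_succ L 0 (by omega)]
  have := hL.1.getElem_add_le_getElem_zero k (by omega)
  omega

lemma bgRank_eq_sum_neg_one_pow (L : List ℕ) :
    bgRank L = ∑ i ∈ Finset.Icc 1 L.length,
      if Odd (entry L i) then (-1 : ℤ) ^ (i + 1) else 0 := by
  rw [bgRank, Finset.natCast_card_filter, Finset.natCast_card_filter, ← Finset.sum_sub_distrib]
  refine Finset.sum_congr rfl fun i _ => ?_
  rcases Nat.even_or_odd i with hi | hi
  · split_ifs <;> simp_all [pow_succ, hi.neg_one_pow, Nat.not_odd_iff_even.mpr hi]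
  · split_ifs <;> simp_all [pow_succ, hi.neg_one_pow, Nat.not_even_iff_odd.mpr hi]

lemma sum_neg_one_pow_over_row (a b N : ℕ) (ha : 1 ≤ a) (hN : b + a ≤ N + 1) :
    ∑ j ∈ Finset.Icc 1 N, (if a ≤ j ∧ j ≤ b + a - 1 then (-1 : ℤ) ^ (j + 1) else 0) =
      if Odd b then (-1) ^ (a + 1) else 0 := by
  have hrow : (Finset.Icc 1 N).filter (fun j => a ≤ j ∧ j ≤ b + a - 1) = Finset.Ico a (a + b) := by
    ext j
    simp only [Finset.mem_filter, Finset.mem_Icc, Finset.mem_Ico]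
    omega
  rw [← Finset.sum_filter, hrow, Finset.sum_Ico_add_neg_one_pow_succ]

/-- Remark 3.3: for a strict partition `λ` with column sequence `c_1, …, c_{λ_1}`,
the BG-rank satisfies `r(λ) = ∑_{j=1}^{λ_1} (−1)^{j+1} c_j`. -/
theorem bgRank_eq_neg_alt_colSum (L : List ℕ) (hL : IsStrictPartition L) :
    bgRank L = ∑ j ∈ Finset.Icc 1 (entry L 1), (-1 : ℤ) ^ (j + 1) * (colSeq L j : ℤ) := by
  calc bgRank L
      = ∑ i ∈ Finset.Icc 1 L.length, if Odd (entry L i) then (-1 : ℤ) ^ (i + 1) else 0 :=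
        bgRank_eq_sum_neg_one_pow L
    _ = ∑ i ∈ Finset.Icc 1 L.length, ∑ j ∈ Finset.Icc 1 (entry L 1),
          if i ≤ j ∧ j ≤ entry L i + i - 1 then (-1 : ℤ) ^ (j + 1) else 0 := by
        refine Finset.sum_congr rfl fun i hi => ?_
        rw [Finset.mem_Icc] at hi
        exact (sum_neg_one_pow_over_row i (entry L i) (entry L 1) hi.1
          (hL.entry_add_le i hi.1 hi.2)).symm
    _ = ∑ j ∈ Finset.Icc 1 (entry L 1), (-1 : ℤ) ^ (j + 1) * (colSeq L j : ℤ) := by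
        rw [Finset.sum_comm]
        simp only [colSeq, Finset.natCast_card_filter, Finset.mul_sum, mul_boole]
end

section
/- Let k, m, n be integers with k > 0, m > 2k − 1, and n ≥ m(m+1)/2. Then the number of strict partitions of n with exactly m parts and BG-rank equal to k equals the number of (2k−1, m−2k+1)-sequences Δ with |Δ| = n − k(2k−1). -/
/-!
Read a strict partition `λ` with `m` parts through its shifted Young diagram, row `i` occupying
columns `i, …, i + λ_i − 1`. Since the rows end in a weakly decreasing way and every row ends at
column `≥ m`, the first `m` columns have heights `1, 2, …, m`, and for `a = 2k − 1 < m` the column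
heights from column `a + 1` on form a sequence `Δ` satisfying the conditions (1), (2) of an
`(a, m − a)`-sequence, with `|Δ| = n − (1 + ⋯ + a) = n − k(2k − 1)`.

Counting the cells of the diagram with sign `(−1)^column`, row `i` contributes `(−1)^i` if `λ_i` is
odd and `0` otherwise, so the signed count is `−r(λ)`. The first `a` columns contribute `−k` and,
`a` being odd, the remaining ones `−∑ (−1)^i d_i`; hence `r(λ) = k` is exactly condition (3).

Conversely the column heights determine `λ` (`λ_i` is the number of columns of height `≥ i`),
and every `(a, b)`-sequence arises, from `λ_i = (a + b + 1 − i) + #{t > b : d_t ≥ i}`.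
-/

open Finset

theorem sum_Icc_add_eq {M : Type*} [AddCommMonoid M] (f : ℕ → M) (a n : ℕ) :
    ∑ i ∈ Icc (a + 1) (a + n), f i = ∑ i ∈ Icc 1 n, f (a + i) := by
  rw [← map_add_left_Icc, sum_map]
  rfl

theorem sum_Icc_one_add {M : Type*} [AddCommMonoid M] (f : ℕ → M) (a n : ℕ) :
    ∑ i ∈ Icc 1 (a + n), f i = ∑ i ∈ Icc 1 a, f i + ∑ i ∈ Icc 1 n, f (a + i) := by
  have hIoc (x y : ℕ) : Icc (x + 1) y = Ioc x y := Icc_add_one_left_eq_Ioc x y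
  rw [← sum_Icc_add_eq, hIoc 0, hIoc 0, hIoc a,
    sum_Ioc_consecutive f (Nat.zero_le a) (Nat.le_add_right a n)]

theorem sum_Ico_neg_one_pow (i n : ℕ) :
    ∑ j ∈ Ico i (i + n), (-1 : ℤ) ^ j = if Odd n then (-1) ^ i else 0 := by
  induction n with
  | zero => simp
  | succ n ih =>
    rw [← add_assoc, sum_Ico_succ_top (by omega), ih, pow_add]
    by_cases h : Odd n
    · simp [h, h.neg_one_pow, Nat.odd_add_one]
    · simp [h, (Nat.not_odd_iff_even.1 h).neg_one_pow, Nat.odd_add_one]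

theorem sum_Icc_two_mul_sub_one (k : ℕ) : ∑ j ∈ Icc 1 (2 * k - 1), j = k * (2 * k - 1) := by
  induction k with
  | zero => simp
  | succ k ih =>
    rcases k.eq_zero_or_pos with rfl | hk
    · simp
    rw [show 2 * (k + 1) - 1 = 2 * k - 1 + 1 + 1 by omega, sum_Icc_succ_top (by omega),
      sum_Icc_succ_top (by omega), ih]
    obtain ⟨c, rfl⟩ := Nat.exists_eq_add_of_lt hk
    rw [show 2 * (0 + c + 1) - 1 = 2 * c + 1 by omega]
    ring

theorem sum_Icc_neg_one_pow_mul_two_mul_sub_one (k : ℕ) :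
    ∑ j ∈ Icc 1 (2 * k - 1), (-1 : ℤ) ^ j * j = -k := by
  induction k with
  | zero => simp
  | succ k ih =>
    rcases k.eq_zero_or_pos with rfl | hk
    · simp
    rw [show 2 * (k + 1) - 1 = 2 * k - 1 + 1 + 1 by omega, sum_Icc_succ_top (by omega),
      sum_Icc_succ_top (by omega), ih, show 2 * k - 1 + 1 = 2 * k by omega, pow_succ,
      (even_two_mul k).neg_one_pow]
    push_cast
    ring

/-- A set of indices `> b` that is closed downwards to `b + 1` is `{b + 1, …, b + #S}`. -/
theorem le_card_iff_add_mem {S : Finset ℕ} {b s : ℕ} (hS : ∀ t ∈ S, b < t)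
    (hdown : ∀ t ∈ S, ∀ t', b < t' → t' ≤ t → t' ∈ S) (hs : 1 ≤ s) :
    s ≤ #S ↔ b + s ∈ S := by
  constructor
  · intro h
    by_contra hbs
    have hsub : S ⊆ Ioc b (b + s - 1) := fun t ht => by
      have hbt := hS t ht
      have hts : t < b + s := by
        by_contra hts
        exact hbs (hdown t ht _ (by omega) (by omega))
      rw [mem_Ioc]
      omega
    have := card_le_card hsub
    rw [Nat.card_Ioc] at this
    omega
  · intro h
    have hsub : Ioc b (b + s) ⊆ S := fun t ht => hdown _ h t (mem_Ioc.1 ht).1 (mem_Ioc.1 ht).2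
    simpa using card_le_card hsub

theorem sum_mul_card_filter {R ι κ : Type*} [CommSemiring R] (s : Finset ι) (t : Finset κ)
    (r : ι → κ → Prop) [∀ i j, Decidable (r i j)] (w : κ → R) :
    ∑ j ∈ t, w j * #{i ∈ s | r i j} = ∑ i ∈ s, ∑ j ∈ t with r i j, w j := by
  simp_rw [natCast_card_filter, mul_sum, sum_filter]
  rw [sum_comm]
  simp

theorem entry_eq_getElem {L : List ℕ} {i : ℕ} (h1 : 1 ≤ i) (hi : i ≤ L.length) :
    entry L i = L[i - 1]'(by omega) := by
  simp [entry, List.getD_eq_getElem?_getD,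
    List.getElem?_eq_getElem (show i - 1 < L.length by omega)]

theorem entry_eq_zero_of_length_lt {L : List ℕ} {i : ℕ} (hi : L.length < i) : entry L i = 0 :=
  List.getD_eq_default _ _ (by omega)

theorem entry_ofFn {n : ℕ} (f : Fin n → ℕ) {i : ℕ} (h1 : 1 ≤ i) (hi : i ≤ n) :
    entry (List.ofFn f) i = f ⟨i - 1, by omega⟩ := by
  rw [entry_eq_getElem h1 (by simpa using hi)]
  simp

theorem sum_entry_eq_sum (L : List ℕ) : ∑ i ∈ Icc 1 L.length, entry L i = L.sum := by
  rw [← Ico_add_one_right_eq_Icc, sum_Ico_eq_sum_range, ← Fin.sum_univ_eq_sum_range]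
  simp [entry, List.getD_eq_getElem?_getD, add_comm 1]

theorem entry_le_sum {L : List ℕ} {i : ℕ} (h1 : 1 ≤ i) : entry L i ≤ L.sum := by
  rcases le_or_gt i L.length with hi | hi
  · rw [entry_eq_getElem h1 hi]
    exact List.le_sum_of_mem (List.getElem_mem _)
  · simp [entry_eq_zero_of_length_lt hi]

theorem List.ext_entry {L L' : List ℕ} (hlen : L.length = L'.length)
    (h : ∀ i, 1 ≤ i → i ≤ L.length → entry L i = entry L' i) : L = L' := by
  refine List.ext_getElem hlen fun i hi hi' => ?_
  simpa [entry_eq_getElem (by omega : 1 ≤ i + 1) (by omega : i + 1 ≤ L.length),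
    entry_eq_getElem (by omega : 1 ≤ i + 1) (by omega : i + 1 ≤ L'.length)]
    using h (i + 1) (by omega) (by omega)

theorem bgRank_eq_neg_sum (L : List ℕ) :
    bgRank L = -∑ i ∈ Icc 1 L.length, if Odd (entry L i) then (-1 : ℤ) ^ i else 0 := by
  rw [bgRank, natCast_card_filter, natCast_card_filter, ← sum_sub_distrib, ← sum_neg_distrib]
  refine sum_congr rfl fun i _ => ?_
  rcases Nat.even_or_odd i with h | h <;> by_cases ho : Odd (entry L i) <;>
    simp [h, ho, h.neg_one_pow, Nat.not_odd_iff_even, Nat.not_even_iff_odd]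

namespace IsStrictPartition

variable {L : List ℕ} (hL : IsStrictPartition L)
include hL

theorem entry_pos {i : ℕ} (h1 : 1 ≤ i) (hi : i ≤ L.length) : 0 < entry L i := by
  rw [entry_eq_getElem h1 hi]
  exact hL.2 _ (List.getElem_mem _)

theorem entry_lt_entry {i j : ℕ} (h1 : 1 ≤ i) (hij : i < j) (hj : j ≤ L.length) :
    entry L j < entry L i := by
  rw [entry_eq_getElem h1 (by omega), entry_eq_getElem (by omega) hj]
  exact List.Pairwise.rel_get_of_lt hL.1 (by simp [Fin.lt_def]; omega)

theorem entry_add_le_entry_add {i j : ℕ} (h1 : 1 ≤ i) (hij : i ≤ j) (hj : j ≤ L.length) :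
    entry L j + j ≤ entry L i + i := by
  induction j, hij using Nat.le_induction with
  | base => rfl
  | succ j hij ih =>
    have := hL.entry_lt_entry (by omega) (Nat.lt_add_one j) hj
    have := ih (by omega)
    omega

theorem length_le_entry_one_s7 : L.length ≤ entry L 1 := by
  rcases Nat.eq_zero_or_pos L.length with h | h
  · omega
  have := hL.entry_add_le_entry_add le_rfl h le_rfl
  have := hL.entry_pos h le_rfl
  omega

theorem le_colSeq_iff {i j : ℕ} (h1 : 1 ≤ i) (hi : i ≤ L.length) :
    i ≤ colSeq L j ↔ i ≤ j ∧ j < entry L i + i := by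
  have hpos := hL.entry_pos h1 hi
  rw [colSeq, le_card_iff_add_mem (b := 0) _ _ h1, zero_add, mem_filter, mem_Icc]
  · omega
  · intro t ht
    simp only [mem_filter, mem_Icc] at ht
    omega
  · intro t ht t' ht' htt'
    simp only [mem_filter, mem_Icc] at ht ⊢
    have := hL.entry_add_le_entry_add ht' htt' ht.1.2
    have := hL.entry_pos ht' (by omega)
    omega

theorem colSeq_of_le_length {j : ℕ} (h1 : 1 ≤ j) (hj : j ≤ L.length) : colSeq L j = j := by
  have hge := (hL.le_colSeq_iff h1 hj).2 ⟨le_rfl, by have := hL.entry_pos h1 hj; omega⟩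
  have hle :=
    (hL.le_colSeq_iff (i := colSeq L j) (j := j) (by omega) (colSeq_le_length L j)).1 le_rfl
  omega

theorem colSeq_pos {j : ℕ} (h1 : 1 ≤ j) (hj : j ≤ entry L 1) : 0 < colSeq L j := by
  have hlen : 1 ≤ L.length := by
    by_contra h
    rw [entry_eq_zero_of_length_lt (by omega)] at hj
    omega
  exact (hL.le_colSeq_iff le_rfl hlen).2 ⟨h1, by omega⟩

theorem colSeq_le_colSeq {j j' : ℕ} (hj : L.length ≤ j) (hjj' : j ≤ j') :
    colSeq L j' ≤ colSeq L j := by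
  rcases Nat.eq_zero_or_pos (colSeq L j') with h | h
  · omega
  have hc := colSeq_le_length L j'
  have := (hL.le_colSeq_iff h hc).1 le_rfl
  exact (hL.le_colSeq_iff h hc).2 ⟨by omega, by omega⟩

theorem entry_eq_card_le_colSeq {i : ℕ} (h1 : 1 ≤ i) (hi : i ≤ L.length) :
    entry L i = #{j ∈ Icc 1 (entry L 1) | i ≤ colSeq L j} := by
  have := hL.entry_add_le_entry_add le_rfl h1 hi
  have : {j ∈ Icc 1 (entry L 1) | i ≤ colSeq L j} = Ico i (i + entry L i) := by
    ext j
    simp only [mem_filter, mem_Icc, mem_Ico, hL.le_colSeq_iff h1 hi]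
    omega
  rw [this, Nat.card_Ico]
  omega

theorem filter_row_eq_Ico {N i : ℕ} (hN : entry L 1 ≤ N) (h1 : 1 ≤ i) (hi : i ≤ L.length) :
    {j ∈ Icc 1 N | i ≤ j ∧ j ≤ entry L i + i - 1} = Ico i (i + entry L i) := by
  have := hL.entry_add_le_entry_add le_rfl h1 hi
  have := hL.entry_pos h1 hi
  ext j
  simp only [mem_filter, mem_Icc, mem_Ico]
  omega

theorem sum_colSeq {N : ℕ} (hN : entry L 1 ≤ N) : ∑ j ∈ Icc 1 N, colSeq L j = L.sum := by
  have h := sum_mul_card_filter (Icc 1 L.length) (Icc 1 N)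
    (fun i j => i ≤ j ∧ j ≤ entry L i + i - 1) (fun _ => (1 : ℕ))
  simp only [one_mul, Nat.cast_id, sum_const, smul_eq_mul, mul_one] at h
  rw [← sum_entry_eq_sum]
  unfold colSeq
  rw [h]
  refine sum_congr rfl fun i hi => ?_
  rw [mem_Icc] at hi
  rw [hL.filter_row_eq_Ico hN hi.1 hi.2, Nat.card_Ico]
  omega

theorem sum_neg_one_pow_mul_colSeq {N : ℕ} (hN : entry L 1 ≤ N) :
    ∑ j ∈ Icc 1 N, (-1 : ℤ) ^ j * colSeq L j = -bgRank L := by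
  rw [bgRank_eq_neg_sum, neg_neg]
  unfold colSeq
  rw [sum_mul_card_filter]
  refine sum_congr rfl fun i hi => ?_
  rw [mem_Icc] at hi
  rw [hL.filter_row_eq_Ico hN hi.1 hi.2, sum_Ico_neg_one_pow]

end IsStrictPartition

def colTail (a : ℕ) (L : List ℕ) : List ℕ :=
  List.ofFn fun t : Fin (entry L 1 - a) => colSeq L (a + t + 1)

theorem length_colTail (a : ℕ) (L : List ℕ) : (colTail a L).length = entry L 1 - a := by
  simp [colTail]

theorem entry_colTail (a : ℕ) (L : List ℕ) {i : ℕ} (h1 : 1 ≤ i) (hi : i ≤ entry L 1 - a) :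
    entry (colTail a L) i = colSeq L (a + i) := by
  rw [colTail, entry_ofFn _ h1 hi]
  congr 1
  simp only
  omega

namespace IsStrictPartition

variable {L : List ℕ} (hL : IsStrictPartition L) {a : ℕ}
include hL

theorem sum_colTail (ha : a ≤ L.length) : ∑ j ∈ Icc 1 a, j + (colTail a L).sum = L.sum := by
  have hl := hL.length_le_entry_one_s7
  rw [← hL.sum_colSeq (N := a + (entry L 1 - a)) (by omega), sum_Icc_one_add,
    ← sum_entry_eq_sum (colTail a L), length_colTail]
  congr 1
  · exact sum_congr rfl fun j hj =>
      (hL.colSeq_of_le_length (mem_Icc.1 hj).1 (by simp at hj; omega)).symm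
  · exact sum_congr rfl fun i hi => entry_colTail a L (mem_Icc.1 hi).1 (mem_Icc.1 hi).2

theorem neg_bgRank_eq (ha : a ≤ L.length) :
    -bgRank L = ∑ j ∈ Icc 1 a, (-1 : ℤ) ^ j * j +
      (-1) ^ a * altSum (colTail a L) (colTail a L).length := by
  have hl := hL.length_le_entry_one_s7
  rw [← hL.sum_neg_one_pow_mul_colSeq (N := a + (entry L 1 - a)) (by omega), sum_Icc_one_add,
    altSum, length_colTail, mul_sum]
  congr 1
  · refine sum_congr rfl fun j hj => ?_
    rw [hL.colSeq_of_le_length (mem_Icc.1 hj).1 (by simp at hj; omega)]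
  · refine sum_congr rfl fun i hi => ?_
    rw [entry_colTail a L (mem_Icc.1 hi).1 (mem_Icc.1 hi).2, pow_add]
    ring

theorem bgRank_eq_iff_altSum_colTail {k : ℕ} (hk : 0 < k) (hlen : 2 * k - 1 ≤ L.length) :
    bgRank L = k ↔ altSum (colTail (2 * k - 1) L) (colTail (2 * k - 1) L).length = 0 := by
  have h := hL.neg_bgRank_eq hlen
  rw [sum_Icc_neg_one_pow_mul_two_mul_sub_one,
    (show Odd (2 * k - 1) from ⟨k - 1, by omega⟩).neg_one_pow] at h
  omega

theorem isABSeq_colTail {b : ℕ} (hlen : L.length = a + b) (hb : 1 ≤ b)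
    (halt : altSum (colTail a L) (colTail a L).length = 0) : IsABSeq a b (colTail a L) := by
  have hl := hL.length_le_entry_one_s7
  have hlt := length_colTail a L
  refine ⟨hb, by omega, fun i h1 hi => ?_, fun i h1 hi => ?_, fun i j hbi hij hj => ?_, halt⟩
  · rw [entry_colTail a L h1 (by omega)]
    exact hL.colSeq_pos (by omega) (by omega)
  · rw [entry_colTail a L h1 (by omega)]
    exact hL.colSeq_of_le_length (by omega) (by omega)
  · rw [entry_colTail a L (by omega) (by omega), entry_colTail a L (by omega) (by omega)]
    exact hL.colSeq_le_colSeq (by omega) (by omega)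

end IsStrictPartition

theorem colTail_injOn {a m : ℕ} (ha : a ≤ m) :
    Set.InjOn (colTail a) {L | IsStrictPartition L ∧ L.length = m} := by
  rintro L ⟨hL, hlen⟩ L' ⟨hL', hlen'⟩ h
  have hl := hL.length_le_entry_one_s7
  have hl' := hL'.length_le_entry_one_s7
  have hentry_one : entry L 1 = entry L' 1 := by
    have := congrArg List.length h
    rw [length_colTail, length_colTail] at this
    omega
  have hcol : ∀ j ∈ Icc 1 (entry L 1), colSeq L j = colSeq L' j := fun j hj => by
    rw [mem_Icc] at hj
    rcases le_or_gt j a with hja | hja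
    · rw [hL.colSeq_of_le_length hj.1 (by omega), hL'.colSeq_of_le_length hj.1 (by omega)]
    · have e := entry_colTail a L (i := j - a) (by omega) (by omega)
      have e' := entry_colTail a L' (i := j - a) (by omega) (by omega)
      rw [Nat.add_sub_cancel' hja.le] at e e'
      rw [← e, ← e', h]
  refine List.ext_entry (by omega) fun i h1 hi => ?_
  rw [hL.entry_eq_card_le_colSeq h1 hi, hL'.entry_eq_card_le_colSeq h1 (by omega), ← hentry_one]
  exact congrArg card (filter_congr fun j hj => by rw [hcol j hj])

def tailCount (b : ℕ) (d : List ℕ) (i : ℕ) : ℕ :=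
  #{t ∈ Icc (b + 1) d.length | i ≤ entry d t}

/-- In the shifted diagram with column heights `1, …, a + b, d_{b+1}, …, d_l`, row `i` has
`a + b + 1 − i` cells among the first `a + b` columns and one cell in each later column of height
`≥ i`. -/
def ofColTail (a b : ℕ) (d : List ℕ) : List ℕ :=
  List.ofFn fun i : Fin (a + b) => (a + b - i) + tailCount b d (i + 1)

theorem length_ofColTail (a b : ℕ) (d : List ℕ) : (ofColTail a b d).length = a + b := by
  simp [ofColTail]

theorem entry_ofColTail (a b : ℕ) (d : List ℕ) {i : ℕ} (h1 : 1 ≤ i) (hi : i ≤ a + b) :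
    entry (ofColTail a b d) i = (a + b + 1 - i) + tailCount b d i := by
  rw [ofColTail, entry_ofFn _ h1 hi]
  simp only [Nat.sub_add_cancel h1]
  omega

theorem antitone_tailCount (b : ℕ) (d : List ℕ) : Antitone (tailCount b d) :=
  fun _ _ h => card_le_card fun t ht => by
    rw [mem_filter] at ht ⊢
    exact ⟨ht.1, h.trans ht.2⟩

theorem isStrictPartition_ofColTail (a b : ℕ) (d : List ℕ) :
    IsStrictPartition (ofColTail a b d) := by
  refine ⟨List.pairwise_ofFn.2 fun i j hij => ?_, fun x hx => ?_⟩
  · have := antitone_tailCount b d (show (i : ℕ) + 1 ≤ j + 1 by omega)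
    have := j.2
    omega
  · obtain ⟨i, rfl⟩ := List.mem_ofFn.1 hx
    have := i.2
    omega

namespace IsABSeq

variable {a b : ℕ} {d : List ℕ} (hd : IsABSeq a b d)
include hd

theorem entry_le {t : ℕ} (ht : 1 ≤ t) : entry d t ≤ a + b := by
  obtain ⟨hb, hbl, -, hinit, hanti, -⟩ := hd
  rcases le_or_gt t b with h | h
  · rw [hinit t ht h]
    omega
  rcases le_or_gt t d.length with h' | h'
  · have := hanti b t le_rfl h.le h'
    rw [hinit b hb le_rfl] at this
    exact this
  · rw [entry_eq_zero_of_length_lt h']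
    omega

theorem sum_pos : 0 < d.sum := by
  have := entry_le_sum (L := d) le_rfl
  rw [hd.2.2.2.1 1 le_rfl hd.1] at this
  omega

theorem tailCount_one : tailCount b d 1 = d.length - b := by
  rw [tailCount, filter_true_of_mem fun t ht => hd.2.2.1 t (by simp at ht; omega) (mem_Icc.1 ht).2,
    Nat.card_Icc]
  omega

theorem le_tailCount_iff {i s : ℕ} (h1 : 1 ≤ i) (hs : 1 ≤ s) :
    s ≤ tailCount b d i ↔ i ≤ entry d (b + s) := by
  obtain ⟨-, -, -, -, hanti, -⟩ := hd
  rw [tailCount, le_card_iff_add_mem _ _ hs, mem_filter, mem_Icc]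
  · constructor
    · exact fun h => h.2
    · intro h
      refine ⟨⟨by omega, ?_⟩, h⟩
      by_contra hlen
      rw [entry_eq_zero_of_length_lt (by omega)] at h
      omega
  · intro t ht
    simp only [mem_filter, mem_Icc] at ht
    omega
  · intro t ht t' ht' htt'
    simp only [mem_filter, mem_Icc] at ht ⊢
    exact ⟨⟨ht', by omega⟩, ht.2.trans (hanti t' t (by omega) htt' ht.1.2)⟩

theorem card_le_tailCount {s : ℕ} (hs : 1 ≤ s) :
    #{i ∈ Icc 1 (a + b) | s ≤ tailCount b d i} = entry d (b + s) := by
  have hle := hd.entry_le (t := b + s) (by omega)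
  have : {i ∈ Icc 1 (a + b) | s ≤ tailCount b d i} = Icc 1 (entry d (b + s)) := by
    ext i
    simp only [mem_filter, mem_Icc]
    constructor
    · rintro ⟨⟨hi1, -⟩, h⟩
      exact ⟨hi1, (hd.le_tailCount_iff hi1 hs).1 h⟩
    · rintro ⟨hi1, h⟩
      exact ⟨⟨hi1, by omega⟩, (hd.le_tailCount_iff hi1 hs).2 h⟩
  rw [this, Nat.card_Icc]
  omega

theorem entry_one_ofColTail : entry (ofColTail a b d) 1 = a + d.length := by
  have hb := hd.1
  have hbl := hd.2.1
  rw [entry_ofColTail a b d le_rfl (by omega), hd.tailCount_one]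
  omega

theorem colSeq_ofColTail {j : ℕ} (hj : a + 1 ≤ j) :
    colSeq (ofColTail a b d) j = entry d (j - a) := by
  have hL := isStrictPartition_ofColTail a b d
  have hlen := length_ofColTail a b d
  rcases le_or_gt j (a + b) with hjab | hjab
  · rw [hL.colSeq_of_le_length (by omega) (by omega), hd.2.2.2.1 (j - a) (by omega) (by omega)]
    omega
  · have hrow : ∀ i ∈ Icc 1 (a + b), (i ≤ j ∧ j ≤ entry (ofColTail a b d) i + i - 1 ↔
        j - (a + b) ≤ tailCount b d i) := fun i hi => by
      rw [mem_Icc] at hi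
      rw [entry_ofColTail a b d hi.1 hi.2]
      omega
    rw [colSeq, hlen, filter_congr hrow, hd.card_le_tailCount (by omega)]
    congr 1
    omega

theorem colTail_ofColTail : colTail a (ofColTail a b d) = d := by
  have := hd.2.1
  have hlen : (colTail a (ofColTail a b d)).length = d.length := by
    rw [length_colTail, hd.entry_one_ofColTail]
    omega
  refine List.ext_entry hlen fun i h1 hi => ?_
  rw [entry_colTail a _ h1 (by rw [hd.entry_one_ofColTail]; omega),
    hd.colSeq_ofColTail (by omega), Nat.add_sub_cancel_left]

end IsABSeq

theorem image_colTail {k m n : ℕ} (hk : 0 < k) (hm : 2 * k - 1 < m) :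
    colTail (2 * k - 1) ''
        {L | IsStrictPartition L ∧ L.length = m ∧ L.sum = n ∧ bgRank L = k} =
      {d | IsABSeq (2 * k - 1) (m - 2 * k + 1) d ∧ d.sum = n - k * (2 * k - 1)} := by
  ext d
  constructor
  · rintro ⟨L, ⟨hL, hlen, hsum, hbg⟩, rfl⟩
    have hsum' := hL.sum_colTail (a := 2 * k - 1) (by omega)
    rw [sum_Icc_two_mul_sub_one] at hsum'
    exact ⟨hL.isABSeq_colTail (by omega) (by omega)
      ((hL.bgRank_eq_iff_altSum_colTail hk (by omega)).1 hbg), by omega⟩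
  · rintro ⟨hd, hsum⟩
    have hL := isStrictPartition_ofColTail (2 * k - 1) (m - 2 * k + 1) d
    have hlen := length_ofColTail (2 * k - 1) (m - 2 * k + 1) d
    have hsum' := hL.sum_colTail (a := 2 * k - 1) (by omega)
    rw [sum_Icc_two_mul_sub_one, hd.colTail_ofColTail] at hsum'
    -- `0 < d.sum` rules out a truncated `n - k * (2 * k - 1)`.
    have := hd.sum_pos
    refine ⟨_, ⟨hL, by omega, by omega, ?_⟩, hd.colTail_ofColTail⟩
    rw [hL.bgRank_eq_iff_altSum_colTail hk (by omega), hd.colTail_ofColTail]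
    exact hd.2.2.2.2.2

theorem strict_bg_count_case1_general (k m n : ℕ) (hk : 0 < k) (hm : 2 * k - 1 < m) :
    Set.ncard {L : List ℕ | IsStrictPartition L ∧ L.length = m ∧ L.sum = n ∧
      bgRank L = (k : ℤ)} =
    Set.ncard {d : List ℕ | IsABSeq (2 * k - 1) (m - 2 * k + 1) d ∧
      d.sum = n - k * (2 * k - 1)} := by
  rw [← image_colTail hk hm]
  refine (Set.InjOn.ncard_image ?_).symm
  exact (colTail_injOn hm.le).mono fun _ hL => And.intro hL.1 hL.2.1

/-- Theorem 3.4(1): for `k > 0`, `m > 2k − 1`, `n ≥ m(m+1)/2`, the number of strict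
partitions of `n` with exactly `m` parts and BG-rank `k` equals the number of
`(2k−1, m−2k+1)`-sequences `Δ` with `|Δ| = n − k(2k−1)`. -/
theorem strict_bg_count_case1 (k m n : ℕ) (hk : 0 < k) (hm : 2 * k - 1 < m)
    (hn : m * (m + 1) / 2 ≤ n) :
    Set.ncard {L : List ℕ | IsStrictPartition L ∧ L.length = m ∧ L.sum = n ∧
      bgRank L = (k : ℤ)} =
    Set.ncard {d : List ℕ | IsABSeq (2 * k - 1) (m - 2 * k + 1) d ∧
      d.sum = n - k * (2 * k - 1)} :=
  strict_bg_count_case1_general k m n hk hm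
end
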